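/- arXiv:1311.2722 — 6 statements merged into one kernel-verified Lean document; each statement's English description precedes it below -/
import Mathlib

section
/- If I ⊆ [a,b] is an open interval on which the convex envelope of f is strictly below f (a shock interval), then the convex envelope of f on [a,b] is affine on I. -/
open Set

/-- Convex envelope of `f` on `[a,b]`: pointwise supremum of all convex functions
on `[a,b]` lying below `f`. -/
noncomputable def convEnv (f : ℝ → ℝ) (a b : ℝ) (u : ℝ) : ℝ :=
  sSup {y : ℝ | ∃ g : ℝ → ℝ, ConvexOn ℝ (Set.Icc a b) g ∧
    (∀ x ∈ Set.Icc a b, g x ≤ f x) ∧ g u = y}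

/-- An affine function is convex on any convex set. -/
lemma convexOn_of_affine {s : Set ℝ} (hs : Convex ℝ s) (A : ℝ → ℝ) (m q : ℝ)
    (h : ∀ x, A x = m * x + q) : ConvexOn ℝ s A := by
  refine ⟨hs, fun x _ y _ t u ht hu htu => le_of_eq ?_⟩
  simp only [h, smul_eq_mul]
  linear_combination (-q) * htu

theorem convEnv_affine_on_shock_interval (f : ℝ → ℝ) (a b c d : ℝ)
    (hf : Continuous f) (hab : a < b)
    (hsub : Set.Ioo c d ⊆ Set.Icc a b)
    (hshock : ∀ u ∈ Set.Ioo c d, convEnv f a b u < f u) :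
    ∃ m q : ℝ, ∀ u ∈ Set.Ioo c d, convEnv f a b u = m * u + q := by
  rcases le_or_gt d c with hdc | hcd
  · exact ⟨0, 0, fun u hu => absurd hu (by simp [Set.Ioo_eq_empty (not_lt.mpr hdc)])⟩
  set E : ℝ → ℝ := convEnv f a b with hEdef
  set S : ℝ → Set ℝ := fun u => {y : ℝ | ∃ g : ℝ → ℝ, ConvexOn ℝ (Set.Icc a b) g ∧
    (∀ x ∈ Set.Icc a b, g x ≤ f x) ∧ g u = y} with hSdef
  have hE : ∀ u, E u = sSup (S u) := fun u => rfl
  -- a ≤ c and d ≤ b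
  have hac : a ≤ c := by
    by_contra h
    push_neg at h
    have hx : (c + min a d) / 2 ∈ Set.Ioo c d := by
      constructor
      · have : c < min a d := lt_min h hcd
        linarith
      · have : min a d ≤ d := min_le_right a d
        have : c < min a d := lt_min h hcd
        linarith [min_le_right a d]
    have := (hsub hx).1
    have h2 : (c + min a d) / 2 < a := by
      have h3 : c < min a d := lt_min h hcd
      have h4 : min a d ≤ a := min_le_left a d
      linarith
    linarith
  have hdb : d ≤ b := by
    by_contra h
    push_neg at h
    have hx : (max b c + d) / 2 ∈ Set.Ioo c d := by
      have h3 : max b c < d := max_lt h hcd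
      constructor
      · linarith [le_max_right b c]
      · linarith
    have := (hsub hx).2
    have h3 : max b c < d := max_lt h hcd
    have h4 : b ≤ max b c := le_max_left b c
    linarith
  have hIooab : Set.Ioo c d ⊆ Set.Ioo a b := fun x hx =>
    ⟨lt_of_le_of_lt hac hx.1, lt_of_lt_of_le hx.2 hdb⟩
  -- an admissible function exists: the constant equal to the min of f
  obtain ⟨x₀, hx₀, hmin₀⟩ := isCompact_Icc.exists_isMinOn ⟨a, le_refl a, hab.le⟩
    hf.continuousOn (α := ℝ) (β := ℝ)
  have hSne : ∀ u, (S u).Nonempty := fun u =>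
    ⟨f x₀, fun _ => f x₀, convexOn_const _ (convex_Icc a b), fun x hx => hmin₀ hx, rfl⟩
  have hSbdd : ∀ u ∈ Set.Icc a b, BddAbove (S u) := by
    intro u hu
    refine ⟨f u, ?_⟩
    rintro y ⟨g, hgc, hgl, rfl⟩
    exact hgl u hu
  have hEle : ∀ u ∈ Set.Icc a b, E u ≤ f u := by
    intro u hu
    rw [hE]
    refine csSup_le (hSne u) ?_
    rintro y ⟨g, hgc, hgl, rfl⟩
    exact hgl u hu
  have hgE : ∀ g : ℝ → ℝ, ConvexOn ℝ (Set.Icc a b) g → (∀ x ∈ Set.Icc a b, g x ≤ f x) →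
      ∀ u ∈ Set.Icc a b, g u ≤ E u := by
    intro g hgc hgl u hu
    rw [hE]
    exact le_csSup (hSbdd u hu) ⟨g, hgc, hgl, rfl⟩
  have hEconv : ConvexOn ℝ (Set.Icc a b) E := by
    refine ⟨convex_Icc a b, fun x hx y hy s t hs ht hst => ?_⟩
    have hmem : s • x + t • y ∈ Set.Icc a b := (convex_Icc a b) hx hy hs ht hst
    rw [hE]
    refine csSup_le (hSne _) ?_
    rintro z ⟨g, hgc, hgl, rfl⟩
    refine le_trans (hgc.2 hx hy hs ht hst) ?_
    simp only [smul_eq_mul]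
    have h1 : g x ≤ E x := hgE g hgc hgl x hx
    have h2 : g y ≤ E y := hgE g hgc hgl y hy
    gcongr
  have hEcont : ContinuousOn E (Set.Ioo a b) :=
    (hEconv.subset Set.Ioo_subset_Icc_self (convex_Ioo a b)).continuousOn isOpen_Ioo
  -- key chord lemma
  have key : ∀ p ∈ Set.Ioo c d, ∀ r ∈ Set.Ioo c d, p < r →
      ∀ u ∈ Set.Icc p r, E u = E p + (E r - E p) / (r - p) * (u - p) := by
    intro p hp r hr hpr
    have hprIoo : Set.Icc p r ⊆ Set.Ioo c d := fun x hx =>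
      ⟨lt_of_lt_of_le hp.1 hx.1, lt_of_le_of_lt hx.2 hr.2⟩
    have hprab : Set.Icc p r ⊆ Set.Ioo a b := fun x hx => hIooab (hprIoo hx)
    have hprIcc : Set.Icc p r ⊆ Set.Icc a b := fun x hx => hsub (hprIoo hx)
    have hpIcc : p ∈ Set.Icc a b := hsub hp
    have hrIcc : r ∈ Set.Icc a b := hsub hr
    have hrp : (0:ℝ) < r - p := sub_pos.mpr hpr
    set σ := (E r - E p) / (r - p) with hσdef
    set L : ℝ → ℝ := fun x => E p + σ * (x - p) with hLdef
    have hσ : σ * (r - p) = E r - E p := div_mul_cancel₀ _ hrp.ne'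
    have hLp : L p = E p := by simp [hLdef]
    have hLr : L r = E r := by
      simp only [hLdef]
      linarith [hσ]
    -- E ≤ L on [p,r]
    have hEleL : ∀ x ∈ Set.Icc p r, E x ≤ L x := by
      intro x hx
      rcases eq_or_lt_of_le hx.1 with h1 | h1
      · rw [← h1, hLp]
      rcases eq_or_lt_of_le hx.2 with h2 | h2
      · rw [h2, hLr]
      have hsl := hEconv.slope_mono_adjacent hpIcc hrIcc h1 h2
      rw [div_le_div_iff₀ (by linarith) (by linarith)] at hsl
      simp only [hLdef]
      nlinarith [hsl, hσ, hrp]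
    -- L ≤ E outside [p,r]
    have hLleE : ∀ x ∈ Set.Icc a b, (x < p ∨ r < x) → L x ≤ E x := by
      intro x hx hcase
      rcases hcase with h | h
      · have hsl := hEconv.slope_mono_adjacent hx hrIcc h hpr
        rw [div_le_div_iff₀ (by linarith) hrp] at hsl
        simp only [hLdef]
        nlinarith [hsl, hσ]
      · have hsl := hEconv.slope_mono_adjacent hpIcc hx hpr h
        rw [div_le_div_iff₀ hrp (by linarith)] at hsl
        simp only [hLdef]
        nlinarith [hsl, hσ]
    -- maximum of L - E on [p,r]
    have hcontLE : ContinuousOn (fun x => L x - E x) (Set.Icc p r) := by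
      refine ContinuousOn.sub ?_ (hEcont.mono hprab)
      exact (continuous_const.add (continuous_const.mul (continuous_id.sub continuous_const))).continuousOn
    obtain ⟨w, hw, hwmax⟩ := isCompact_Icc.exists_isMaxOn ⟨p, le_refl p, hpr.le⟩ hcontLE
    set D := L w - E w with hDdef
    have hDle : D ≤ 0 := by
      by_contra hD
      push_neg at hD
      -- minimum of f - E on [p,r]
      obtain ⟨v, hv, hvmin⟩ := isCompact_Icc.exists_isMinOn ⟨p, le_refl p, hpr.le⟩
        ((hf.continuousOn).sub (hEcont.mono hprab))
      set η := f v - E v with hηdef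
      have hη : 0 < η := sub_pos.mpr (hshock v (hprIoo hv))
      set t := min η D with htdef
      have htpos : 0 < t := lt_min hη hD
      set g : ℝ → ℝ := fun x => max (E x) (L x - D + t) with hgdef
      have hgconv : ConvexOn ℝ (Set.Icc a b) g := by
        have hA : ConvexOn ℝ (Set.Icc a b) (fun x => L x - D + t) := by
          refine convexOn_of_affine (convex_Icc a b) _ σ (E p - σ * p - D + t) ?_
          intro x
          simp only [hLdef]
          ring
        exact hEconv.sup hA
      have hgle : ∀ x ∈ Set.Icc a b, g x ≤ f x := by
        intro x hx
        by_cases hxpr : x ∈ Set.Icc p r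
        · refine max_le (hEle x hx) ?_
          have h1 : L x - E x ≤ D := hwmax hxpr
          have h2 : η ≤ f x - E x := hvmin hxpr
          have h3 : t ≤ η := min_le_left _ _
          linarith
        · have hout : x < p ∨ r < x := by
            rcases lt_or_ge x p with h | h
            · exact Or.inl h
            · rcases le_or_gt x r with h' | h'
              · exact absurd ⟨h, h'⟩ hxpr
              · exact Or.inr h'
          have h1 : L x ≤ E x := hLleE x hx hout
          have h2 : t ≤ D := min_le_right _ _
          refine max_le (hEle x hx) (by linarith [hEle x hx])
      have hcontra : g w ≤ E w := hgE g hgconv hgle w (hprIcc hw)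
      have : E w + t ≤ g w := by
        have : L w - D + t = E w + t := by simp [hDdef]
        rw [← this]
        exact le_max_right _ _
      linarith
    intro u hu
    have h1 : E u ≤ L u := hEleL u hu
    have h2 : L u - E u ≤ D := hwmax hu
    have : L u = E u := le_antisymm (by linarith) h1
    simp only [hLdef] at this
    linarith [this]
  -- assemble: fix two reference points
  set p0 := (2 * c + d) / 3 with hp0def
  set r0 := (c + 2 * d) / 3 with hr0def
  have hp0 : p0 ∈ Set.Ioo c d := by constructor <;> (simp only [hp0def]; linarith)
  have hr0 : r0 ∈ Set.Ioo c d := by constructor <;> (simp only [hr0def]; linarith)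
  have hp0r0 : p0 < r0 := by simp only [hp0def, hr0def]; linarith
  refine ⟨(E r0 - E p0) / (r0 - p0), E p0 - (E r0 - E p0) / (r0 - p0) * p0, ?_⟩
  intro u hu
  set p := min u p0 with hpdef
  set r := max u r0 with hrdef
  have hp : p ∈ Set.Ioo c d :=
    ⟨lt_min hu.1 hp0.1, lt_of_le_of_lt (min_le_right u p0) hp0.2⟩
  have hr : r ∈ Set.Ioo c d :=
    ⟨lt_of_lt_of_le hr0.1 (le_max_right u r0), max_lt hu.2 hr0.2⟩
  have hpr : p < r := lt_of_le_of_lt (min_le_right u p0)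
    (lt_of_lt_of_le hp0r0 (le_max_right u r0))
  have hup : u ∈ Set.Icc p r := ⟨min_le_left u p0, le_max_left u r0⟩
  have hp0m : p0 ∈ Set.Icc p r :=
    ⟨min_le_right u p0, le_trans hp0r0.le (le_max_right u r0)⟩
  have hr0m : r0 ∈ Set.Icc p r :=
    ⟨le_trans (min_le_right u p0) hp0r0.le, le_max_right u r0⟩
  have h_u := key p hp r hr hpr u hup
  have h_p0 := key p hp r hr hpr p0 hp0m
  have h_r0 := key p hp r hr hpr r0 hr0m
  set σ' := (E r - E p) / (r - p) with hσ'def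
  have hr0p0 : r0 - p0 ≠ 0 := by
    have : p0 < r0 := hp0r0
    intro h; linarith [sub_eq_zero.mp h]
  have hs : (E r0 - E p0) / (r0 - p0) = σ' := by
    rw [h_p0, h_r0]
    field_simp
    ring
  rw [h_u, hs, h_p0]
  ring
end

section
/- If f is C^{1,1} (differentiable with Lipschitz derivative), then the convex envelope of f on [a,b] is differentiable on [a,b] (one-sidedly at the endpoints). -/
open Set Filter Topology

namespace ConvEnvAux

lemma convexOn_affine {s : Set ℝ} (hs : Convex ℝ s) (p q : ℝ) :
    ConvexOn ℝ s (fun x => p * x + q) := by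
  refine ⟨hs, fun x _ y _ t u ht hu htu => ?_⟩
  simp only [smul_eq_mul]
  apply le_of_eq
  linear_combination (-q) * htu

variable {f : ℝ → ℝ} {a b u : ℝ}

lemma ES_bddAbove (hu : u ∈ Icc a b) :
    BddAbove {y : ℝ | ∃ g : ℝ → ℝ, ConvexOn ℝ (Set.Icc a b) g ∧
      (∀ x ∈ Set.Icc a b, g x ≤ f x) ∧ g u = y} :=
  ⟨f u, fun _ ⟨g, _, hgf, hgu⟩ => hgu ▸ hgf u hu⟩

lemma le_convEnv {g : ℝ → ℝ} (hg : ConvexOn ℝ (Set.Icc a b) g)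
    (hgf : ∀ x ∈ Set.Icc a b, g x ≤ f x) (hu : u ∈ Icc a b) :
    g u ≤ convEnv f a b u :=
  le_csSup (ES_bddAbove hu) ⟨g, hg, hgf, rfl⟩

lemma ES_nonempty (hab : a ≤ b) (hfc : ContinuousOn f (Icc a b)) (u : ℝ) :
    {y : ℝ | ∃ g : ℝ → ℝ, ConvexOn ℝ (Set.Icc a b) g ∧
      (∀ x ∈ Set.Icc a b, g x ≤ f x) ∧ g u = y}.Nonempty := by
  obtain ⟨z, hz, hzmin⟩ := isCompact_Icc.exists_isMinOn (nonempty_Icc.2 hab) hfc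
  exact ⟨f z, fun _ => f z, ⟨convex_Icc a b, fun x _ y _ t s ht hs hts => by
    simp only [smul_eq_mul]; apply le_of_eq; linear_combination (-(f z)) * hts⟩, fun x hx => hzmin hx, rfl⟩

lemma convEnv_le (hab : a ≤ b) (hfc : ContinuousOn f (Icc a b)) (hu : u ∈ Icc a b) :
    convEnv f a b u ≤ f u :=
  csSup_le (ES_nonempty hab hfc u) (fun _ ⟨g, _, hgf, hgu⟩ => hgu ▸ hgf u hu)

lemma convEnv_convexOn (hab : a ≤ b) (hfc : ContinuousOn f (Icc a b)) :
    ConvexOn ℝ (Icc a b) (convEnv f a b) := by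
  refine ⟨convex_Icc a b, fun x hx y hy t s ht hs hts => ?_⟩
  have hmem : t • x + s • y ∈ Icc a b := (convex_Icc a b) hx hy ht hs hts
  refine csSup_le (ES_nonempty hab hfc _) ?_
  rintro z ⟨g, hg, hgf, rfl⟩
  calc g (t • x + s • y) ≤ t • g x + s • g y := hg.2 hx hy ht hs hts
    _ ≤ t • convEnv f a b x + s • convEnv f a b y := by
        have h1 := le_convEnv hg hgf hx
        have h2 := le_convEnv hg hgf hy
        simp only [smul_eq_mul]
        have := mul_le_mul_of_nonneg_left h1 ht
        have := mul_le_mul_of_nonneg_left h2 hs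
        linarith

end ConvEnvAux
theorem convEnv_differentiable (f : ℝ → ℝ) (a b : ℝ) (L : NNReal)
    (hf : Differentiable ℝ f) (hL : LipschitzWith L (deriv f)) (hab : a < b) :
    ∀ u ∈ Set.Icc a b,
      DifferentiableWithinAt ℝ (convEnv f a b) (Set.Icc a b) u := by
  intro u hu
  classical
  obtain ⟨hau, hub⟩ := hu
  have hu : u ∈ Icc a b := ⟨hau, hub⟩
  have hfc : ContinuousOn f (Icc a b) := hf.continuous.continuousOn
  set c := convEnv f a b with hcdef
  obtain ⟨M, hM⟩ : ∃ M, ∀ x ∈ Icc a b, ‖deriv f x‖ ≤ M :=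
    isCompact_Icc.exists_bound_of_continuousOn hL.continuous.continuousOn
  have hLip : ∀ x ∈ Icc a b, ∀ y ∈ Icc a b, f x - f y ≤ M * |x - y| := by
    intro x hx y hy
    have h1 := (convex_Icc a b).norm_image_sub_le_of_norm_hasDerivWithin_le
      (f' := deriv f) (fun z _ => (hf z).hasDerivAt.hasDerivWithinAt) hM hy hx
    rw [Real.norm_eq_abs, Real.norm_eq_abs] at h1
    calc f x - f y ≤ |f x - f y| := le_abs_self _
      _ ≤ M * |x - y| := h1
  have hcc : ConvexOn ℝ (Icc a b) c := ConvEnvAux.convEnv_convexOn hab.le hfc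
  have hcle : ∀ x ∈ Icc a b, c x ≤ f x := fun x hx => ConvEnvAux.convEnv_le hab.le hfc hx
  have hgle : ∀ g : ℝ → ℝ, ConvexOn ℝ (Icc a b) g → (∀ x ∈ Icc a b, g x ≤ f x) →
      ∀ x ∈ Icc a b, g x ≤ c x := fun g hg hgf x hx => ConvEnvAux.le_convEnv hg hgf hx
  -- barrier at a
  have hbarA : ∀ y ∈ Icc a b, f a - M * (y - a) ≤ c y := by
    intro y hy
    have hgf : ∀ x ∈ Icc a b, (-M) * x + (f a + M * a) ≤ f x := by
      intro x hx
      have h1 := hLip a (left_mem_Icc.2 hab.le) x hx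
      have habs : |a - x| = x - a := by
        rw [abs_sub_comm]; exact abs_of_nonneg (by linarith [hx.1])
      rw [habs] at h1
      linarith
    have h2 := hgle _ (ConvEnvAux.convexOn_affine (convex_Icc a b) (-M) (f a + M * a)) hgf y hy
    have h3 : f a - M * (y - a) = (-M) * y + (f a + M * a) := by ring
    rw [h3]; exact h2
  -- barrier at b
  have hbarB : ∀ y ∈ Icc a b, f b + M * (y - b) ≤ c y := by
    intro y hy
    have hgf : ∀ x ∈ Icc a b, M * x + (f b - M * b) ≤ f x := by
      intro x hx
      have h1 := hLip b (right_mem_Icc.2 hab.le) x hx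
      have habs : |b - x| = b - x := abs_of_nonneg (by linarith [hx.2])
      rw [habs] at h1
      linarith
    have h2 := hgle _ (ConvEnvAux.convexOn_affine (convex_Icc a b) M (f b - M * b)) hgf y hy
    have h3 : f b + M * (y - b) = M * y + (f b - M * b) := by ring
    rw [h3]; exact h2
  have hca : c a = f a := by
    have h1 := hbarA a (left_mem_Icc.2 hab.le)
    have h2 := hcle a (left_mem_Icc.2 hab.le)
    have : f a - M * (a - a) = f a := by ring
    rw [this] at h1; linarith
  have hcb : c b = f b := by
    have h1 := hbarB b (right_mem_Icc.2 hab.le)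
    have h2 := hcle b (right_mem_Icc.2 hab.le)
    have : f b + M * (b - b) = f b := by ring
    rw [this] at h1; linarith
  -- the slope function based at u
  set q : ℝ → ℝ := fun y => (c y - c u) / (y - u) with hqdef
  have hqmono : ∀ x ∈ Icc a b, ∀ y ∈ Icc a b, x ≠ u → y ≠ u → x ≤ y → q x ≤ q y :=
    fun x hx y hy hxu hyu hxy => hcc.secant_mono hu hx hy hxu hyu hxy
  have hqslope : slope c u = q := funext fun y => slope_def_field c u y
  -- key: differentiability from one/two-sided limits
  rcases eq_or_lt_of_le hau with hA | hau'
  · -- u = a : right endpoint analysis only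
    subst hA
    have hRmono : MonotoneOn q (Ioo a b) := fun x hx y hy hxy =>
      hqmono x ⟨hx.1.le, hx.2.le⟩ y ⟨hy.1.le, hy.2.le⟩ (ne_of_gt hx.1) (ne_of_gt hy.1) hxy
    have hbddR : BddBelow (q '' Ioo a b) := by
      refine ⟨-M, ?_⟩
      rintro z ⟨y, hy, rfl⟩
      have h1 := hbarA y ⟨hy.1.le, hy.2.le⟩
      rw [hqdef]
      rw [le_div_iff₀ (by linarith [hy.1] : (0:ℝ) < y - a)]
      linarith [h1, hca]
    have htendR : Tendsto q (𝓝[>] a) (𝓝 (sInf (q '' Ioo a b))) :=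
      MonotoneOn.tendsto_nhdsWithin_Ioo_right (nonempty_Ioo.2 hab) hRmono hbddR
    refine HasDerivWithinAt.differentiableWithinAt (f' := sInf (q '' Ioo a b)) ?_
    rw [hasDerivWithinAt_iff_tendsto_slope, hqslope]
    refine htendR.mono_left (nhdsWithin_mono a ?_)
    rintro x ⟨hx, hne⟩
    exact lt_of_le_of_ne hx.1 (fun h => hne (by simp [← h]))
  rcases eq_or_lt_of_le hub with hB | hub'
  · -- u = b : left endpoint analysis only
    subst hB
    have hLmono : MonotoneOn q (Ioo a u) := fun x hx y hy hxy =>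
      hqmono x ⟨hx.1.le, hx.2.le⟩ y ⟨hy.1.le, hy.2.le⟩ (ne_of_lt hx.2) (ne_of_lt hy.2) hxy
    have hbddL : BddAbove (q '' Ioo a u) := by
      refine ⟨M, ?_⟩
      rintro z ⟨y, hy, rfl⟩
      have h1 := hbarB y ⟨hy.1.le, hy.2.le⟩
      rw [hqdef]
      rw [div_le_iff_of_neg (by linarith [hy.2] : y - u < 0)]
      linarith [h1, hcb]
    have htendL : Tendsto q (𝓝[<] u) (𝓝 (sSup (q '' Ioo a u))) :=
      MonotoneOn.tendsto_nhdsWithin_Ioo_left (nonempty_Ioo.2 hau') hLmono hbddL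
    refine HasDerivWithinAt.differentiableWithinAt (f' := sSup (q '' Ioo a u)) ?_
    rw [hasDerivWithinAt_iff_tendsto_slope, hqslope]
    refine htendL.mono_left (nhdsWithin_mono u ?_)
    rintro x ⟨hx, hne⟩
    exact lt_of_le_of_ne hx.2 (fun h => hne (by simp [h]))
  -- interior case
  have hRmono : MonotoneOn q (Ioo u b) := fun x hx y hy hxy =>
    hqmono x ⟨(hau'.trans hx.1).le, hx.2.le⟩ y ⟨(hau'.trans hy.1).le, hy.2.le⟩
      (ne_of_gt hx.1) (ne_of_gt hy.1) hxy
  have hLmono : MonotoneOn q (Ioo a u) := fun x hx y hy hxy =>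
    hqmono x ⟨hx.1.le, (hx.2.trans hub').le⟩ y ⟨hy.1.le, (hy.2.trans hub').le⟩
      (ne_of_lt hx.2) (ne_of_lt hy.2) hxy
  have hbddR : BddBelow (q '' Ioo u b) := by
    refine ⟨q a, ?_⟩
    rintro z ⟨y, hy, rfl⟩
    exact hqmono a (left_mem_Icc.2 hab.le) y ⟨(hau'.trans hy.1).le, hy.2.le⟩
      (ne_of_lt hau') (ne_of_gt hy.1) (by linarith [hy.1])
  have hbddL : BddAbove (q '' Ioo a u) := by
    refine ⟨q b, ?_⟩
    rintro z ⟨y, hy, rfl⟩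
    exact hqmono y ⟨hy.1.le, (hy.2.trans hub').le⟩ b (right_mem_Icc.2 hab.le)
      (ne_of_lt hy.2) (ne_of_gt hub') (by linarith [hy.2])
  set dR := sInf (q '' Ioo u b) with hdR
  set dL := sSup (q '' Ioo a u) with hdL
  have htendR : Tendsto q (𝓝[>] u) (𝓝 dR) :=
    MonotoneOn.tendsto_nhdsWithin_Ioo_right (nonempty_Ioo.2 hub') hRmono hbddR
  have htendL : Tendsto q (𝓝[<] u) (𝓝 dL) :=
    MonotoneOn.tendsto_nhdsWithin_Ioo_left (nonempty_Ioo.2 hau') hLmono hbddL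
  have hqrR : ∀ y ∈ Icc a b, u < y → dR ≤ q y := by
    intro y hy hy'
    have hz : (u + y)/2 ∈ Ioo u b := ⟨by linarith, by linarith [hy.2]⟩
    refine le_trans (csInf_le hbddR ⟨_, hz, rfl⟩) ?_
    exact hqmono _ ⟨(hau'.trans hz.1).le, hz.2.le⟩ y hy (ne_of_gt hz.1)
      (ne_of_gt hy') (by linarith)
  have hqlL : ∀ x ∈ Icc a b, x < u → q x ≤ dL := by
    intro x hx hx'
    have hz : (x + u)/2 ∈ Ioo a u := ⟨by linarith [hx.1], by linarith⟩
    refine le_trans ?_ (le_csSup hbddL ⟨_, hz, rfl⟩)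
    exact hqmono x hx _ ⟨hz.1.le, (hz.2.trans hub').le⟩ (ne_of_lt hx')
      (ne_of_lt hz.2) (by linarith)
  have hLeR : dL ≤ dR := by
    refine csSup_le ((nonempty_Ioo.2 hau').image q) ?_
    rintro z ⟨x, hx, rfl⟩
    refine le_csInf ((nonempty_Ioo.2 hub').image q) ?_
    rintro w ⟨y, hy, rfl⟩
    exact hqmono x ⟨hx.1.le, (hx.2.trans hub').le⟩ y ⟨(hau'.trans hy.1).le, hy.2.le⟩
      (ne_of_lt hx.2) (ne_of_gt hy.1) (hx.2.trans hy.1).le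
  clear_value dR dL
  have hEq : dL = dR := by
    by_contra hne
    have hlt : dL < dR := lt_of_le_of_ne hLeR hne
    set p := (dL + dR)/2 with hp
    set δ₀ := (dR - dL)/2 with hδ₀def
    have hδ₀ : 0 < δ₀ := by rw [hδ₀def]; linarith
    clear_value p δ₀
    have hgrow : ∀ x ∈ Icc a b, c u + p * (x - u) + δ₀ * |x - u| ≤ c x := by
      intro x hx
      rcases lt_trichotomy x u with h | h | h
      · have h1 : q x ≤ dL := hqlL x hx h
        have h2 : x - u < 0 := by linarith
        have h3 : q x ≤ p - δ₀ := by rw [hp, hδ₀def] at *; linarith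
        rw [hqdef] at h3
        have h4 := (div_le_iff_of_neg h2).mp h3
        have habs : |x - u| = -(x - u) := abs_of_neg h2
        rw [habs]
        nlinarith [h4]
      · subst h; simp
      · have h1 : dR ≤ q x := hqrR x hx h
        have h2 : (0:ℝ) < x - u := by linarith
        have h3 : p + δ₀ ≤ q x := by rw [hp, hδ₀def] at *; linarith
        rw [hqdef] at h3
        have h4 := (le_div_iff₀ h2).mp h3
        have habs : |x - u| = x - u := abs_of_pos h2
        rw [habs]
        nlinarith [h4]
    rcases eq_or_lt_of_le (hcle u hu) with hcontact | hgap
    · -- contact point: contradiction with differentiability of f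
      have htf : Tendsto (slope f u) (𝓝[≠] u) (𝓝 (deriv f u)) :=
        hasDerivAt_iff_tendsto_slope.1 (hf u).hasDerivAt
      have hR : p + δ₀ ≤ deriv f u := by
        have h1 : Tendsto (slope f u) (𝓝[>] u) (𝓝 (deriv f u)) :=
          htf.mono_left (nhdsWithin_mono u fun x hx => ne_of_gt hx)
        refine ge_of_tendsto h1 ?_
        filter_upwards [Ioo_mem_nhdsGT hub'] with x hx
        rw [slope_def_field]
        have h2 := hgrow x ⟨(hau'.trans hx.1).le, hx.2.le⟩
        have h3 := hcle x ⟨(hau'.trans hx.1).le, hx.2.le⟩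
        have habs : |x - u| = x - u := abs_of_pos (by linarith [hx.1])
        rw [habs] at h2
        rw [le_div_iff₀ (by linarith [hx.1] : (0:ℝ) < x - u)]
        nlinarith [h2, h3, hcontact]
      have hLe : deriv f u ≤ p - δ₀ := by
        have h1 : Tendsto (slope f u) (𝓝[<] u) (𝓝 (deriv f u)) :=
          htf.mono_left (nhdsWithin_mono u fun x hx => ne_of_lt hx)
        refine le_of_tendsto h1 ?_
        filter_upwards [Ioo_mem_nhdsLT hau'] with x hx
        rw [slope_def_field]
        have h2 := hgrow x ⟨hx.1.le, (hx.2.trans hub').le⟩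
        have h3 := hcle x ⟨hx.1.le, (hx.2.trans hub').le⟩
        have habs : |x - u| = -(x - u) := abs_of_neg (by linarith [hx.2])
        rw [habs] at h2
        rw [div_le_iff_of_neg (by linarith [hx.2] : x - u < 0)]
        nlinarith [h2, h3, hcontact]
      linarith
    · -- gap: push up with an affine function
      set ε := f u - c u with hεdef
      have hεpos : 0 < ε := by rw [hεdef]; linarith
      clear_value ε
      obtain ⟨r₀, hr₀, hr⟩ := Metric.continuousAt_iff.1 (hf.continuous.continuousAt (x := u)) (ε/2)
        (by linarith)
      set δ := min (δ₀ * r₀) (ε / (2 * (1 + |p| / δ₀))) with hδdef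
      have hδpos : 0 < δ := lt_min (by positivity) (by positivity)
      have hδ1 : δ ≤ δ₀ * r₀ := min_le_left _ _
      have haux : (0:ℝ) < 1 + |p| / δ₀ := by positivity
      have hδ2 : δ * (1 + |p| / δ₀) ≤ ε / 2 := by
        calc δ * (1 + |p| / δ₀) ≤ (ε / (2 * (1 + |p| / δ₀))) * (1 + |p| / δ₀) :=
              mul_le_mul_of_nonneg_right (min_le_right _ _) haux.le
          _ = ε / 2 := by field_simp
      clear_value δ
      set r := δ / δ₀ with hrdef
      have hrpos : 0 < r := by positivity
      have hrr₀ : r ≤ r₀ := by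
        rw [hrdef, div_le_iff₀ hδ₀]
        linarith [hδ1]
      have hδr : δ = δ₀ * r := by rw [hrdef]; field_simp
      clear_value r
      set g : ℝ → ℝ := fun x => p * x + (c u + δ - p * u) with hg
      have hgu : g u = c u + δ := by rw [hg]; ring_nf
      have hglef : ∀ x ∈ Icc a b, (fun x => c x ⊔ g x) x ≤ f x := by
        intro x hx
        refine sup_le (hcle x hx) ?_
        by_cases hcase : r ≤ |x - u|
        · have h2 := hgrow x hx
          have h5 : δ ≤ δ₀ * |x - u| := by
            rw [hδr]; exact mul_le_mul_of_nonneg_left hcase hδ₀.le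
          have hgx : g x = c u + δ + p * (x - u) := by rw [hg]; ring
          have : g x ≤ c x := by rw [hgx]; linarith
          linarith [hcle x hx]
        · push_neg at hcase
          have hdist : dist x u < r₀ := by
            rw [Real.dist_eq]; exact lt_of_lt_of_le hcase hrr₀
          have h3 : |f x - f u| < ε/2 := by
            have := hr hdist; rwa [Real.dist_eq] at this
          have h4 : p * (x - u) ≤ |p| * r :=
            calc p * (x - u) ≤ |p * (x - u)| := le_abs_self _
              _ = |p| * |x - u| := abs_mul _ _
              _ ≤ |p| * r := mul_le_mul_of_nonneg_left hcase.le (abs_nonneg p)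
          have h5 : δ + |p| * r ≤ ε/2 := by
            have heq : δ + |p| * r = δ * (1 + |p| / δ₀) := by
              rw [hrdef]; field_simp
            linarith [hδ2]
          have h6 : f u - ε/2 ≤ f x := by
            have := abs_lt.1 h3; linarith [this.1]
          have hgx : g x = c u + δ + p * (x - u) := by rw [hg]; ring
          rw [hgx]
          have hεrw : f u = c u + ε := by rw [hεdef]; ring
          linarith
      have hgconv : ConvexOn ℝ (Icc a b) (fun x => c x ⊔ g x) :=
        hcc.sup (ConvEnvAux.convexOn_affine (convex_Icc a b) p (c u + δ - p * u))
      have hfinal := ConvEnvAux.le_convEnv hgconv hglef hu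
      have : c u + δ ≤ c u := by
        calc c u + δ = g u := hgu.symm
          _ ≤ c u ⊔ g u := le_sup_right
          _ ≤ c u := hfinal
      linarith
  -- conclude
  refine HasDerivWithinAt.differentiableWithinAt (f' := dR) ?_
  rw [hasDerivWithinAt_iff_tendsto_slope, hqslope]
  have hsub : Icc a b \ {u} ⊆ Iio u ∪ Ioi u := by
    rintro x ⟨_, hne⟩
    have hxu : x ≠ u := fun h => hne (by simp [h])
    rcases lt_or_gt_of_ne hxu with h | h
    · exact Or.inl h
    · exact Or.inr h
  refine Tendsto.mono_left ?_ (le_trans (nhdsWithin_mono u hsub) (le_of_eq (nhdsWithin_union _ _ _)))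
  rw [tendsto_sup]
  exact ⟨hEq ▸ htendL, htendR⟩
end

section
/- If f is C^{1,1} and u ∈ (a,b) is a point where the convex envelope of f on [a,b] equals f (a rarefaction point), then the derivative of the convex envelope at u equals f'(u). -/
open Set Filter Topology

theorem convEnv_deriv_eq_at_rarefaction (f : ℝ → ℝ) (a b u : ℝ) (L : NNReal)
    (hf : Differentiable ℝ f) (hL : LipschitzWith L (deriv f)) (hab : a < b)
    (hu : u ∈ Set.Ioo a b) (htouch : convEnv f a b u = f u) :
    derivWithin (convEnv f a b) (Set.Icc a b) u = deriv f u := by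
  set E := convEnv f a b with hE
  set S : ℝ → Set ℝ := fun x => {y : ℝ | ∃ g : ℝ → ℝ, ConvexOn ℝ (Set.Icc a b) g ∧
    (∀ z ∈ Set.Icc a b, g z ≤ f z) ∧ g x = y} with hS
  have hEx : ∀ x, E x = sSup (S x) := fun x => rfl
  -- a constant lower bound
  obtain ⟨c, hc, hcmin⟩ := isCompact_Icc.exists_isMinOn (nonempty_Icc.2 hab.le)
      (hf.continuous.continuousOn (s := Icc a b))
  replace hcmin : ∀ z ∈ Icc a b, f c ≤ f z := fun z hz => hcmin hz
  have hne : ∀ x, (S x).Nonempty := fun x =>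
    ⟨f c, ⟨fun _ => f c, convexOn_const _ (convex_Icc a b), fun z hz => hcmin z hz, rfl⟩⟩
  have hbdd : ∀ x ∈ Icc a b, BddAbove (S x) := by
    intro x hx
    refine ⟨f x, ?_⟩
    rintro y ⟨g, hg, hgle, rfl⟩
    exact hgle x hx
  have hle : ∀ x ∈ Icc a b, E x ≤ f x := by
    intro x hx
    refine csSup_le (hne x) ?_
    rintro y ⟨g, hg, hgle, rfl⟩
    exact hgle x hx
  have hge : ∀ x ∈ Icc a b, ∀ g : ℝ → ℝ, ConvexOn ℝ (Set.Icc a b) g →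
      (∀ z ∈ Set.Icc a b, g z ≤ f z) → g x ≤ E x := by
    intro x hx g hg hgle
    exact le_csSup (hbdd x hx) ⟨g, hg, hgle, rfl⟩
  -- E is convex on [a,b]
  have hconv : ConvexOn ℝ (Icc a b) E := by
    refine ⟨convex_Icc a b, ?_⟩
    intro x hx y hy p q hp hq hpq
    rw [hEx]
    refine csSup_le (hne _) ?_
    rintro z ⟨g, hg, hgle, rfl⟩
    calc g (p • x + q • y) ≤ p • g x + q • g y := hg.2 hx hy hp hq hpq
      _ ≤ p • E x + q • E y := by
          have h1 := hge x hx g hg hgle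
          have h2 := hge y hy g hg hgle
          simp only [smul_eq_mul]
          nlinarith
  have hmemu : u ∈ Icc a b := Ioo_subset_Icc_self hu
  have hfd : HasDerivAt f (deriv f u) u := (hf u).hasDerivAt
  have hslopef : Tendsto (slope f u) (𝓝[≠] u) (𝓝 (deriv f u)) :=
    hasDerivAt_iff_tendsto_slope.1 hfd
  -- lower bound for slopes of E on the right
  have hlow : ∀ x ∈ Icc a b, u < x → deriv f u ≤ (E x - E u) / (x - u) := by
    intro x hx hux
    have h1 : Tendsto (slope f u) (𝓝[<] u) (𝓝 (deriv f u)) :=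
      hslopef.mono_left (nhdsWithin_mono _ (fun y hy => ne_of_lt hy))
    refine le_of_tendsto h1 ?_
    filter_upwards [Ioo_mem_nhdsLT_of_mem (show u ∈ Ioc a u from ⟨hu.1, le_refl u⟩)]
      with y hy
    have hy1 : y ∈ Icc a b := ⟨hy.1.le, hy.2.le.trans hu.2.le⟩
    have hyu : y < u := hy.2
    have step1 : slope f u y ≤ (E u - E y) / (u - y) := by
      rw [slope_comm, slope_def_field]
      have h2 := hle y hy1
      have h3 : (0:ℝ) < u - y := by linarith
      rw [div_le_div_iff₀ h3 h3]
      nlinarith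
    have step2 : (E u - E y) / (u - y) ≤ (E x - E u) / (x - u) :=
      hconv.slope_mono_adjacent hy1 hx hyu hux
    linarith
  -- upper bound for slopes of E on the left
  have hhigh : ∀ x ∈ Icc a b, x < u → (E u - E x) / (u - x) ≤ deriv f u := by
    intro x hx hxu
    have h1 : Tendsto (slope f u) (𝓝[>] u) (𝓝 (deriv f u)) :=
      hslopef.mono_left (nhdsWithin_mono _ (fun y hy => ne_of_gt hy))
    refine ge_of_tendsto h1 ?_
    filter_upwards [Ioo_mem_nhdsGT_of_mem (show u ∈ Ico u b from ⟨le_refl u, hu.2⟩)]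
      with y hy
    have hy1 : y ∈ Icc a b := ⟨hu.1.le.trans hy.1.le, hy.2.le⟩
    have huy : u < y := hy.1
    have step2 : (E u - E x) / (u - x) ≤ (E y - E u) / (y - u) :=
      hconv.slope_mono_adjacent hx hy1 hxu huy
    have step1 : (E y - E u) / (y - u) ≤ slope f u y := by
      rw [slope_def_field]
      have h2 := hle y hy1
      have h3 : (0:ℝ) < y - u := by linarith
      rw [div_le_div_iff₀ h3 h3]
      nlinarith
    linarith
  -- the squeeze
  have hEd : HasDerivAt E (deriv f u) u := by
    rw [hasDerivAt_iff_tendsto_slope]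
    rw [← tendsto_sub_nhds_zero_iff]
    have hnorm : Tendsto (fun x => ‖slope f u x - deriv f u‖) (𝓝[≠] u) (𝓝 0) := by
      have := hslopef.sub_const (deriv f u)
      simpa using this.norm
    refine squeeze_zero_norm' ?_ hnorm
    filter_upwards [self_mem_nhdsWithin,
      nhdsWithin_le_nhds (Ioo_mem_nhds hu.1 hu.2)] with x hxne hxio
    have hx : x ∈ Icc a b := Ioo_subset_Icc_self hxio
    rw [Real.norm_eq_abs, Real.norm_eq_abs]
    have hlex := hle x hx
    rcases lt_or_gt_of_ne (show x ≠ u from hxne) with h | h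
    · -- x < u
      have hxu : (0:ℝ) < u - x := by linarith
      have hub := hhigh x hx h
      have hsl : slope E u x = (E u - E x) / (u - x) := by
        rw [slope_def_field]
        rw [div_eq_div_iff (by linarith) (by linarith)]
        ring
      have hslf : slope f u x = (f u - f x) / (u - x) := by
        rw [slope_def_field]
        rw [div_eq_div_iff (by linarith) (by linarith)]
        ring
      have hlb : slope f u x ≤ slope E u x := by
        rw [hsl, hslf, div_le_div_iff₀ hxu hxu]
        nlinarith
      have habs : |slope E u x - deriv f u| = deriv f u - slope E u x := by
        rw [abs_of_nonpos (by rw [hsl]; linarith)]; ring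
      rw [habs]
      calc deriv f u - slope E u x ≤ deriv f u - slope f u x := by linarith
        _ ≤ |deriv f u - slope f u x| := le_abs_self _
        _ = |slope f u x - deriv f u| := abs_sub_comm _ _
    · -- u < x
      have hxu : (0:ℝ) < x - u := by linarith
      have hlb := hlow x hx h
      have hsl : slope E u x = (E x - E u) / (x - u) := slope_def_field E u x
      have hub : slope E u x ≤ slope f u x := by
        rw [hsl, slope_def_field, div_le_div_iff₀ hxu hxu]
        nlinarith
      have habs : |slope E u x - deriv f u| = slope E u x - deriv f u := by
        rw [abs_of_nonneg (by rw [hsl]; linarith)]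
      rw [habs]
      calc slope E u x - deriv f u ≤ slope f u x - deriv f u := by linarith
        _ ≤ |slope f u x - deriv f u| := le_abs_self _
  rw [derivWithin_of_mem_nhds (Icc_mem_nhds hu.1 hu.2)]
  exact hEd.deriv
end

section
/- If f is C^{1,1}, then the derivative of the convex envelope of f on [a,b] is Lipschitz continuous with Lipschitz constant at most the Lipschitz constant of f'. -/
open Set

namespace CEnv

variable {f : ℝ → ℝ} {a b : ℝ} {L : NNReal}

lemma lip_bound (hL : LipschitzWith L (deriv f)) (x y : ℝ) :
    |deriv f x - deriv f y| ≤ L * |x - y| := by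
  have := hL.dist_le_mul x y
  rwa [Real.dist_eq, Real.dist_eq] at this

lemma quad_upper (hf : Differentiable ℝ f) (hL : LipschitzWith L (deriv f)) (x y : ℝ) :
    f y ≤ f x + deriv f x * (y - x) + L / 2 * (y - x) ^ 2 := by
  set g : ℝ → ℝ := fun w => f x + deriv f x * (w - x) + L / 2 * (w - x) ^ 2 - f w with hg
  have hd : ∀ w, HasDerivAt g (deriv f x + L * (w - x) - deriv f w) w := by
    intro w
    have h1 : HasDerivAt (fun w : ℝ => f x + deriv f x * (w - x) + L / 2 * (w - x) ^ 2)
        (deriv f x + L / 2 * (2 * (w - x))) w := by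
      have : HasDerivAt (fun w : ℝ => w - x) 1 w := (hasDerivAt_id w).sub_const x
      have h2 := (this.pow 2).const_mul ((L : ℝ) / 2)
      have h3 := (this.const_mul (deriv f x)).const_add (f x)
      simpa [mul_comm, mul_assoc, pow_one] using h3.fun_add h2
    have := h1.fun_sub ((hf w).hasDerivAt)
    exact this.congr_deriv (by ring)
  have key : ∀ w, x ≤ w → 0 ≤ g w := by
    intro w hw
    have hmono : MonotoneOn g (Ici x) := by
      apply monotoneOn_of_deriv_nonneg (convex_Ici x)
      · exact fun z _ => (hd z).continuousAt.continuousWithinAt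
      · intro z hz
        exact (hd z).differentiableAt.differentiableWithinAt
      · intro z hz
        rw [(hd z).deriv]
        have := lip_bound hL z x
        rw [interior_Ici] at hz
        have hzx : x ≤ z := le_of_lt hz
        have : deriv f z - deriv f x ≤ L * (z - x) := by
          have h := (abs_le.1 (lip_bound hL z x)).2
          rwa [abs_of_nonneg (by linarith : (0:ℝ) ≤ z - x)] at h
        linarith
    have h0 : g x = 0 := by simp [hg]
    have := hmono (self_mem_Ici) hw hw
    rwa [h0] at this
  have key2 : ∀ w, w ≤ x → 0 ≤ g w := by
    intro w hw
    have hanti : AntitoneOn g (Iic x) := by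
      apply antitoneOn_of_deriv_nonpos (convex_Iic x)
      · exact fun z _ => (hd z).continuousAt.continuousWithinAt
      · intro z hz
        exact (hd z).differentiableAt.differentiableWithinAt
      · intro z hz
        rw [(hd z).deriv]
        rw [interior_Iic] at hz
        have : deriv f x - deriv f z ≤ L * (x - z) := by
          have h := (abs_le.1 (lip_bound hL x z)).2
          rwa [abs_of_nonneg (by linarith [le_of_lt (mem_Iio.1 hz)] : (0:ℝ) ≤ x - z)] at h
        linarith
    have h0 : g x = 0 := by simp [hg]
    have := hanti hw (self_mem_Iic : x ∈ Iic x) hw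
    rwa [h0] at this
  rcases le_total x y with h | h
  · have := key y h; simp only [hg] at this; linarith
  · have := key2 y h; simp only [hg] at this; linarith

lemma quad_lower (hf : Differentiable ℝ f) (hL : LipschitzWith L (deriv f)) (x y : ℝ) :
    f x + deriv f x * (y - x) - L / 2 * (y - x) ^ 2 ≤ f y := by
  have hf' : Differentiable ℝ (fun w => -f w) := hf.neg
  have hL' : LipschitzWith L (deriv fun w => -f w) := by
    have : (deriv fun w => -f w) = fun w => -deriv f w := by
      funext w; exact deriv.neg
    rw [this]
    intro x y
    have := hL x y
    simpa [edist_neg_neg] using this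
  have := quad_upper hf' hL' x y
  simp only [deriv.fun_neg] at this
  linarith

end CEnv

namespace CEnvB

open CEnv

variable {f : ℝ → ℝ} {a b : ℝ} {L : NNReal}

/-- The set whose sup defines the envelope. -/
def SS (f : ℝ → ℝ) (a b u : ℝ) : Set ℝ :=
  {y : ℝ | ∃ g : ℝ → ℝ, ConvexOn ℝ (Set.Icc a b) g ∧
    (∀ x ∈ Set.Icc a b, g x ≤ f x) ∧ g u = y}

lemma convEnv_eq (u : ℝ) : convEnv f a b u = sSup (SS f a b u) := rfl

lemma convexOn_affine (s : Set ℝ) (hs : Convex ℝ s) (m t : ℝ) :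
    ConvexOn ℝ s (fun w => m * w + t) := by
  refine ⟨hs, fun x _ y _ p q hp hq hpq => le_of_eq ?_⟩
  simp only [smul_eq_mul]
  linear_combination (-t) * hpq

/-- the K₀ constant -/
noncomputable def K₀ (f : ℝ → ℝ) (a b : ℝ) (L : NNReal) : ℝ :=
  |deriv f a| + 2 * L * (b - a)

lemma K0_nonneg (hab : a ≤ b) : 0 ≤ K₀ f a b L := by
  have : (0:ℝ) ≤ 2 * L * (b - a) :=
    mul_nonneg (by positivity) (by linarith)
  have := abs_nonneg (deriv f a)
  unfold K₀; linarith

lemma deriv_bound (hL : LipschitzWith L (deriv f)) (hab : a ≤ b) {x : ℝ} (hx : x ∈ Icc a b) :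
    |deriv f x| ≤ K₀ f a b L := by
  have h := lip_bound hL x a
  have habs : |x - a| ≤ b - a := by
    rw [abs_of_nonneg (by linarith [hx.1] : (0:ℝ) ≤ x - a)]; linarith [hx.2]
  have : |deriv f x| - |deriv f a| ≤ L * (b - a) := by
    have := abs_sub_abs_le_abs_sub (deriv f x) (deriv f a)
    have h2 : (L:ℝ) * |x - a| ≤ L * (b - a) :=
      mul_le_mul_of_nonneg_left habs (NNReal.coe_nonneg L)
    linarith
  unfold K₀
  have hL0 : (0:ℝ) ≤ L * (b - a) :=
    mul_nonneg (NNReal.coe_nonneg L) (by linarith)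
  linarith

lemma lineA_le (hf : Differentiable ℝ f) (hL : LipschitzWith L (deriv f)) (hab : a ≤ b)
    {x : ℝ} (hx : x ∈ Icc a b) : f a - K₀ f a b L * (x - a) ≤ f x := by
  have h := quad_lower hf hL a x
  have h1 : 0 ≤ x - a := by linarith [hx.1]
  have h2 : x - a ≤ b - a := by linarith [hx.2]
  have t1 : 0 ≤ (deriv f a + |deriv f a|) * (x - a) :=
    mul_nonneg (by linarith [neg_abs_le (deriv f a)]) h1
  have t2 : 0 ≤ (L:ℝ) * (x - a) * (2*(b-a) - (x-a)/2) := by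
    apply mul_nonneg (mul_nonneg (NNReal.coe_nonneg L) h1); linarith
  unfold K₀
  nlinarith [h, t1, t2]

lemma lineB_le (hf : Differentiable ℝ f) (hL : LipschitzWith L (deriv f)) (hab : a ≤ b)
    {x : ℝ} (hx : x ∈ Icc a b) : f b + K₀ f a b L * (x - b) ≤ f x := by
  have h := quad_lower hf hL b x
  have h1 : 0 ≤ b - x := by linarith [hx.2]
  have h2 : b - x ≤ b - a := by linarith [hx.1]
  have hb : |deriv f b| ≤ |deriv f a| + L * (b - a) := by
    have h' := lip_bound hL b a
    rw [abs_of_nonneg (show (0:ℝ) ≤ b - a by linarith)] at h'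
    linarith [abs_sub_abs_le_abs_sub (deriv f b) (deriv f a)]
  have t1 : 0 ≤ (|deriv f b| - deriv f b) * (b - x) :=
    mul_nonneg (by linarith [le_abs_self (deriv f b)]) h1
  have t2 : 0 ≤ (L:ℝ) * (b - x) * ((b-a) - (b-x)/2) := by
    apply mul_nonneg (mul_nonneg (NNReal.coe_nonneg L) h1); linarith
  have t3 : 0 ≤ (|deriv f a| + L*(b-a) - |deriv f b|) * (b - x) :=
    mul_nonneg (by linarith) h1
  unfold K₀
  nlinarith [h, t1, t2, t3]

lemma lineA_mem (hf : Differentiable ℝ f) (hL : LipschitzWith L (deriv f)) (hab : a ≤ b) (u : ℝ) :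
    (f a - K₀ f a b L * (u - a)) ∈ SS f a b u := by
  refine ⟨fun w => (- K₀ f a b L) * w + (f a + K₀ f a b L * a), ?_, ?_, by ring⟩
  · exact convexOn_affine _ (convex_Icc a b) _ _
  · intro x hx
    have := lineA_le hf hL hab hx
    show - K₀ f a b L * x + (f a + K₀ f a b L * a) ≤ f x
    linarith

lemma SS_nonempty (hf : Differentiable ℝ f) (hL : LipschitzWith L (deriv f)) (hab : a ≤ b)
    (u : ℝ) : (SS f a b u).Nonempty := ⟨_, lineA_mem hf hL hab u⟩

lemma SS_bddAbove {u : ℝ} (hu : u ∈ Icc a b) : BddAbove (SS f a b u) := by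
  refine ⟨f u, fun y hy => ?_⟩
  obtain ⟨g, _, hgf, rfl⟩ := hy
  exact hgf u hu

lemma env_le_self (hf : Differentiable ℝ f) (hL : LipschitzWith L (deriv f)) (hab : a ≤ b)
    {u : ℝ} (hu : u ∈ Icc a b) : convEnv f a b u ≤ f u := by
  rw [convEnv_eq]
  exact csSup_le (SS_nonempty hf hL hab u) (fun y hy => by
    obtain ⟨g, _, hgf, rfl⟩ := hy; exact hgf u hu)

lemma le_env {g : ℝ → ℝ} (hg : ConvexOn ℝ (Icc a b) g) (hgf : ∀ x ∈ Icc a b, g x ≤ f x)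
    {u : ℝ} (hu : u ∈ Icc a b) : g u ≤ convEnv f a b u :=
  le_csSup (SS_bddAbove hu) ⟨g, hg, hgf, rfl⟩

lemma env_convexOn (hf : Differentiable ℝ f) (hL : LipschitzWith L (deriv f)) (hab : a ≤ b) :
    ConvexOn ℝ (Icc a b) (convEnv f a b) := by
  refine ⟨convex_Icc a b, fun x hx y hy p q hp hq hpq => ?_⟩
  have hxy : p • x + q • y ∈ Icc a b := (convex_Icc a b) hx hy hp hq hpq
  rw [convEnv_eq]
  apply csSup_le (SS_nonempty hf hL hab _)
  rintro z ⟨g, hg, hgf, rfl⟩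
  have h1 := hg.2 hx hy hp hq hpq
  have h2 : g x ≤ convEnv f a b x := le_env hg hgf hx
  have h3 : g y ≤ convEnv f a b y := le_env hg hgf hy
  calc g (p • x + q • y) ≤ p • g x + q • g y := h1
    _ ≤ p • convEnv f a b x + q • convEnv f a b y := by
        simp only [smul_eq_mul]
        have := mul_le_mul_of_nonneg_left h2 hp
        have := mul_le_mul_of_nonneg_left h3 hq
        linarith

lemma env_eq_a (hf : Differentiable ℝ f) (hL : LipschitzWith L (deriv f)) (hab : a ≤ b) :
    convEnv f a b a = f a := by
  refine le_antisymm (env_le_self hf hL hab (left_mem_Icc.2 hab)) ?_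
  have := le_env (f := f) (convexOn_affine _ (convex_Icc a b) (- K₀ f a b L) (f a + K₀ f a b L * a))
    (fun x hx => by
      have := lineA_le hf hL hab hx
      show - K₀ f a b L * x + (f a + K₀ f a b L * a) ≤ f x
      linarith) (left_mem_Icc.2 hab)
  calc f a = - K₀ f a b L * a + (f a + K₀ f a b L * a) := by ring
    _ ≤ _ := this

lemma env_eq_b (hf : Differentiable ℝ f) (hL : LipschitzWith L (deriv f)) (hab : a ≤ b) :
    convEnv f a b b = f b := by
  refine le_antisymm (env_le_self hf hL hab (right_mem_Icc.2 hab)) ?_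
  have := le_env (f := f) (convexOn_affine _ (convex_Icc a b) (K₀ f a b L) (f b - K₀ f a b L * b))
    (fun x hx => by
      have := lineB_le hf hL hab hx
      show K₀ f a b L * x + (f b - K₀ f a b L * b) ≤ f x
      linarith) (right_mem_Icc.2 hab)
  calc f b = K₀ f a b L * b + (f b - K₀ f a b L * b) := by ring
    _ ≤ _ := this

lemma lineA_le_env (hf : Differentiable ℝ f) (hL : LipschitzWith L (deriv f)) (hab : a ≤ b)
    {x : ℝ} (hx : x ∈ Icc a b) : f a - K₀ f a b L * (x - a) ≤ convEnv f a b x := by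
  have := le_env (f := f) (convexOn_affine _ (convex_Icc a b) (- K₀ f a b L) (f a + K₀ f a b L * a))
    (fun w hw => by
      have := lineA_le hf hL hab hw
      show - K₀ f a b L * w + (f a + K₀ f a b L * a) ≤ f w
      linarith) hx
  have h2 : - K₀ f a b L * x + (f a + K₀ f a b L * a) ≤ convEnv f a b x := this
  linarith

lemma lineB_le_env (hf : Differentiable ℝ f) (hL : LipschitzWith L (deriv f)) (hab : a ≤ b)
    {x : ℝ} (hx : x ∈ Icc a b) : f b + K₀ f a b L * (x - b) ≤ convEnv f a b x := by
  have := le_env (f := f) (convexOn_affine _ (convex_Icc a b) (K₀ f a b L) (f b - K₀ f a b L * b))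
    (fun w hw => by
      have := lineB_le hf hL hab hw
      show K₀ f a b L * w + (f b - K₀ f a b L * b) ≤ f w
      linarith) hx
  have h2 : K₀ f a b L * x + (f b - K₀ f a b L * b) ≤ convEnv f a b x := this
  linarith

end CEnvB

namespace CEnvC

open CEnv CEnvB Filter Topology

variable {f : ℝ → ℝ} {a b : ℝ} {L : NNReal}

lemma env_continuousOn (hf : Differentiable ℝ f) (hL : LipschitzWith L (deriv f)) (hab : a < b) :
    ContinuousOn (convEnv f a b) (Icc a b) := by
  intro u hu
  rcases eq_or_lt_of_le hu.1 with rfl | hau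
  · -- u = a
    unfold ContinuousWithinAt
    rw [env_eq_a hf hL hab.le]
    apply tendsto_of_tendsto_of_tendsto_of_le_of_le'
      (g := fun x => f a - K₀ f a b L * (x - a)) (h := f)
    · have : Filter.Tendsto (fun x : ℝ => f a - K₀ f a b L * (x - a)) (nhds a)
          (nhds (f a - K₀ f a b L * (a - a))) := by
        apply Filter.Tendsto.sub tendsto_const_nhds
        apply Filter.Tendsto.const_mul
        exact Filter.Tendsto.sub_const tendsto_id a
      simpa using this.mono_left nhdsWithin_le_nhds
    · exact (hf.continuous.tendsto a).mono_left nhdsWithin_le_nhds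
    · exact eventually_nhdsWithin_of_forall (fun x hx => lineA_le_env hf hL hab.le hx)
    · exact eventually_nhdsWithin_of_forall (fun x hx => env_le_self hf hL hab.le hx)
  rcases eq_or_lt_of_le hu.2 with rfl | hub
  · -- u = b
    unfold ContinuousWithinAt
    rw [env_eq_b hf hL hab.le]
    apply tendsto_of_tendsto_of_tendsto_of_le_of_le'
      (g := fun x => f u + K₀ f a u L * (x - u)) (h := f)
    · have : Filter.Tendsto (fun x : ℝ => f u + K₀ f a u L * (x - u)) (nhds u)
          (nhds (f u + K₀ f a u L * (u - u))) := by
        apply Filter.Tendsto.add tendsto_const_nhds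
        apply Filter.Tendsto.const_mul
        exact Filter.Tendsto.sub_const tendsto_id u
      simpa using this.mono_left nhdsWithin_le_nhds
    · exact (hf.continuous.tendsto u).mono_left nhdsWithin_le_nhds
    · exact eventually_nhdsWithin_of_forall (fun x hx => lineB_le_env hf hL hab.le hx)
    · exact eventually_nhdsWithin_of_forall (fun x hx => env_le_self hf hL hab.le hx)
  · -- interior
    have hconv : ConvexOn ℝ (Ioo a b) (convEnv f a b) :=
      (env_convexOn hf hL hab.le).subset Ioo_subset_Icc_self (convex_Ioo a b)
    have hcont : ContinuousOn (convEnv f a b) (Ioo a b) := hconv.continuousOn isOpen_Ioo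
    have := (hcont u ⟨hau, hub⟩).continuousAt (isOpen_Ioo.mem_nhds ⟨hau, hub⟩)
    exact this.continuousWithinAt

lemma hasDerivWithinAt_of_quad {g : ℝ → ℝ} {s : Set ℝ} {u v C : ℝ}
    (h : ∀ w ∈ s, |g w - g u - v * (w - u)| ≤ C * (w - u) ^ 2) :
    HasDerivWithinAt g v s u := by
  rw [hasDerivWithinAt_iff_tendsto_slope]
  rw [Metric.tendsto_nhdsWithin_nhds]
  intro ε hε
  refine ⟨ε / (|C| + 1), by positivity, fun {w} hw hdist => ?_⟩
  obtain ⟨hws, hwne⟩ := hw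
  have hne : w - u ≠ 0 := sub_ne_zero.2 hwne
  have hslope : slope g u w - v = (g w - g u - v * (w - u)) / (w - u) := by
    rw [slope_def_field]; field_simp
  rw [Real.dist_eq, hslope, abs_div]
  have habs : |w - u| > 0 := abs_pos.2 hne
  rw [div_lt_iff₀ habs]
  have hh := h w hws
  have h2 : |g w - g u - v * (w - u)| ≤ |C| * |w - u| * |w - u| := by
    calc |g w - g u - v * (w - u)| ≤ C * (w - u) ^ 2 := hh
      _ ≤ |C| * (w - u) ^ 2 := by
          apply mul_le_mul_of_nonneg_right (le_abs_self C) (sq_nonneg _)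
      _ = |C| * |w - u| * |w - u| := by rw [← sq_abs]; ring
  have hdu : |w - u| < ε / (|C| + 1) := by
    rw [Real.dist_eq] at hdist; exact hdist
  have hC1 : 0 < |C| + 1 := by positivity
  have : |C| * |w - u| < ε := by
    have h3 : |C| * |w - u| ≤ |C| * (ε / (|C| + 1)) :=
      mul_le_mul_of_nonneg_left hdu.le (abs_nonneg C)
    have h4 : |C| * (ε / (|C| + 1)) < ε := by
      rw [mul_div_assoc']
      rw [div_lt_iff₀ hC1]
      nlinarith [abs_nonneg C]
    linarith
  nlinarith [abs_nonneg (w - u), abs_nonneg C]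

lemma neBot_Ico {p q : ℝ} (hpq : p < q) : (nhdsWithin q (Ico p q)).NeBot := by
  rw [← mem_closure_iff_nhdsWithin_neBot, closure_Ico hpq.ne]
  exact ⟨hpq.le, le_rfl⟩

lemma neBot_Ioc {p q : ℝ} (hpq : p < q) : (nhdsWithin p (Ioc p q)).NeBot := by
  rw [← mem_closure_iff_nhdsWithin_neBot, closure_Ioc hpq.ne]
  exact ⟨le_rfl, hpq.le⟩

/-- if c is affine to the left of q (on [p,q)) with slope σ and differentiable within Icc a b
at q, then σ is the derivative. -/
lemma slope_eq_deriv_left {c : ℝ → ℝ} {p q d σ : ℝ} (hpq : p < q)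
    (hq : HasDerivWithinAt c d (Icc a b) q) (hsub : Ico p q ⊆ Icc a b)
    (haff : ∀ w ∈ Ico p q, c w = c q + σ * (w - q)) : σ = d := by
  have htend : Filter.Tendsto (slope c q) (nhdsWithin q (Icc a b \ {q})) (nhds d) :=
    hasDerivWithinAt_iff_tendsto_slope.1 hq
  have hsub2 : Ico p q ⊆ Icc a b \ {q} := fun w hw => ⟨hsub hw, fun hq' => (ne_of_lt hw.2) hq'⟩
  have htend2 : Filter.Tendsto (slope c q) (nhdsWithin q (Ico p q)) (nhds d) :=
    htend.mono_left (nhdsWithin_mono q hsub2)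
  have hconst : Filter.Tendsto (slope c q) (nhdsWithin q (Ico p q)) (nhds σ) := by
    apply Filter.Tendsto.congr' _ tendsto_const_nhds
    apply eventually_nhdsWithin_of_forall
    intro w hw
    rw [slope_def_field, haff w hw]
    have : w - q ≠ 0 := sub_ne_zero.2 (ne_of_lt hw.2)
    field_simp
    ring
  haveI := neBot_Ico hpq
  exact tendsto_nhds_unique hconst htend2

lemma slope_eq_deriv_right {c : ℝ → ℝ} {p q d σ : ℝ} (hpq : p < q)
    (hp : HasDerivWithinAt c d (Icc a b) p) (hsub : Ioc p q ⊆ Icc a b)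
    (haff : ∀ w ∈ Ioc p q, c w = c p + σ * (w - p)) : σ = d := by
  have htend : Filter.Tendsto (slope c p) (nhdsWithin p (Icc a b \ {p})) (nhds d) :=
    hasDerivWithinAt_iff_tendsto_slope.1 hp
  have hsub2 : Ioc p q ⊆ Icc a b \ {p} := fun w hw => ⟨hsub hw, fun hp' => (ne_of_gt hw.1) hp'⟩
  have htend2 : Filter.Tendsto (slope c p) (nhdsWithin p (Ioc p q)) (nhds d) :=
    htend.mono_left (nhdsWithin_mono p hsub2)
  have hconst : Filter.Tendsto (slope c p) (nhdsWithin p (Ioc p q)) (nhds σ) := by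
    apply Filter.Tendsto.congr' _ tendsto_const_nhds
    apply eventually_nhdsWithin_of_forall
    intro w hw
    rw [slope_def_field, haff w hw]
    have : w - p ≠ 0 := sub_ne_zero.2 (ne_of_gt hw.1)
    field_simp
    ring
  haveI := neBot_Ioc hpq
  exact tendsto_nhds_unique hconst htend2

end CEnvC

namespace CEnvD

open CEnv CEnvB CEnvC Filter Topology

variable {f : ℝ → ℝ} {a b : ℝ} {L : NNReal}

lemma half_bound (L : NNReal) {d ε : ℝ} (hd : d ≤ 2*ε/(L+1)) (hε : 0 < ε) :
    (L:ℝ)/2 * d ≤ ε := by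
  have hL1 : (0:ℝ) < (L:ℝ)+1 := by positivity
  have h := mul_le_mul_of_nonneg_left hd (by positivity : (0:ℝ) ≤ (L:ℝ)/2)
  have h2 : (L:ℝ)/2 * (2*ε/((L:ℝ)+1)) ≤ ε := by
    rw [show (L:ℝ)/2 * (2*ε/((L:ℝ)+1)) = (L:ℝ) * ε / ((L:ℝ)+1) by ring,
      div_le_iff₀ hL1]
    nlinarith [NNReal.coe_nonneg L]
  linarith

/-- At an interior contact point, the tangent line of f minorizes the envelope. -/
lemma contact_lower (hf : Differentiable ℝ f) (hL : LipschitzWith L (deriv f)) (hab : a < b)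
    {u : ℝ} (hu : u ∈ Ioo a b) (hc : convEnv f a b u = f u) :
    ∀ w ∈ Icc a b, convEnv f a b u + deriv f u * (w - u) ≤ convEnv f a b w := by
  intro w hw
  set c := convEnv f a b with hcdef
  have hconv := env_convexOn hf hL hab.le
  have huI : u ∈ Icc a b := ⟨hu.1.le, hu.2.le⟩
  rcases lt_trichotomy w u with hwu | rfl | hwu
  · -- w < u : need slope(w,u) ≤ f' u
    have key : (c w - c u) / (w - u) ≤ deriv f u := by
      apply le_of_forall_pos_le_add
      intro ε hε
      set v := min b (u + 2 * ε / (L + 1)) with hv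
      have hvu : u < v := by
        apply lt_min hu.2
        have : 0 < 2 * ε / ((L:ℝ) + 1) := by positivity
        linarith
      have hvI : v ∈ Icc a b := ⟨by linarith [hu.1], min_le_left _ _⟩
      have hsec := hconv.secant_mono huI hw hvI (ne_of_lt hwu) (ne_of_gt hvu) (by linarith)
      have hupper : c v - c u ≤ deriv f u * (v - u) + L/2 * (v - u)^2 := by
        have h1 : c v ≤ f v := env_le_self hf hL hab.le hvI
        have h2 := quad_upper hf hL u v
        rw [hc]; linarith
      have hdiv : (c v - c u)/(v - u) ≤ deriv f u + L/2 * (v - u) := by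
        rw [div_le_iff₀ (by linarith : (0:ℝ) < v - u)]
        nlinarith [hupper]
      have hsmall : (L:ℝ)/2 * (v - u) ≤ ε := by
        apply half_bound L _ hε
        have := min_le_right b (u + 2 * ε / ((L:ℝ) + 1))
        simp only [hv]; linarith
      linarith
    have hwune : w - u < 0 := by linarith
    rw [div_le_iff_of_neg hwune] at key
    linarith
  · simp
  · -- u < w : need slope(u,w) ≥ f' u
    have key : deriv f u ≤ (c w - c u) / (w - u) := by
      apply le_of_forall_pos_le_add
      intro ε hε
      set v := max a (u - 2 * ε / (L + 1)) with hv
      have hvu : v < u := by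
        apply max_lt hu.1
        have : 0 < 2 * ε / ((L:ℝ) + 1) := by positivity
        linarith
      have hvI : v ∈ Icc a b := ⟨le_max_left _ _, by linarith [hu.2]⟩
      have hsec := hconv.secant_mono huI hvI hw (ne_of_lt hvu) (ne_of_gt hwu) (by linarith)
      have hupper : c v - c u ≤ deriv f u * (v - u) + L/2 * (v - u)^2 := by
        have h1 : c v ≤ f v := env_le_self hf hL hab.le hvI
        have h2 := quad_upper hf hL u v
        rw [hc]; linarith
      have hdiv : deriv f u + L/2 * (v - u) ≤ (c v - c u)/(v - u) := by
        rw [le_div_iff_of_neg (by linarith : v - u < 0)]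
        nlinarith [hupper]
      have hsmall : (L:ℝ)/2 * (u - v) ≤ ε := by
        apply half_bound L _ hε
        have := le_max_right a (u - 2 * ε / ((L:ℝ) + 1))
        simp only [hv]; linarith
      linarith
    have hwupos : 0 < w - u := by linarith
    rw [le_div_iff₀ hwupos] at key
    linarith

lemma deriv_at_interior_contact (hf : Differentiable ℝ f) (hL : LipschitzWith L (deriv f))
    (hab : a < b) {u : ℝ} (hu : u ∈ Ioo a b) (hc : convEnv f a b u = f u) :
    HasDerivWithinAt (convEnv f a b) (deriv f u) (Icc a b) u := by
  apply hasDerivWithinAt_of_quad (C := (L:ℝ)/2)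
  intro w hw
  rw [abs_le]
  constructor
  · have := contact_lower hf hL hab hu hc w hw
    nlinarith [sq_nonneg (w - u), NNReal.coe_nonneg L]
  · have h1 : convEnv f a b w ≤ f w := env_le_self hf hL hab.le hw
    have h2 := quad_upper hf hL u w
    rw [hc]
    linarith

lemma deriv_at_a_acc (hf : Differentiable ℝ f) (hL : LipschitzWith L (deriv f)) (hab : a < b)
    (hacc : ∀ ε > (0:ℝ), ∃ z, z ∈ Icc a b ∧ convEnv f a b z = f z ∧ a < z ∧ z < a + ε) :
    HasDerivWithinAt (convEnv f a b) (deriv f a) (Icc a b) a := by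
  set c := convEnv f a b with hcdef
  have hconv := env_convexOn hf hL hab.le
  have hca : c a = f a := env_eq_a hf hL hab.le
  have haI : a ∈ Icc a b := left_mem_Icc.2 hab.le
  apply hasDerivWithinAt_of_quad (C := (L:ℝ)/2)
  intro w hw
  rw [abs_le]
  constructor
  · -- lower bound
    rcases eq_or_lt_of_le hw.1 with rfl | haw
    · simp
    obtain ⟨z, hzI, hzc, haz, hzw⟩ := hacc (w - a) (by linarith)
    have hzw' : z < w := by linarith
    have hsec := hconv.secant_mono haI hzI hw (ne_of_gt haz) (ne_of_gt haw) hzw'.le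
    -- (c z - c a)/(z - a) ≤ (c w - c a)/(w - a)
    have hfz : (c z - c a)/(z - a) ≥ deriv f a - L/2 * (z - a) := by
      have h2 := quad_lower hf hL a z
      rw [hzc, hca]
      rw [ge_iff_le, le_div_iff₀ (by linarith : (0:ℝ) < z - a)]
      nlinarith
    have hslope : (c w - c a)/(w - a) ≥ deriv f a - L/2 * (w - a) := by
      have : (L:ℝ)/2 * (z - a) ≤ (L:ℝ)/2 * (w - a) :=
        mul_le_mul_of_nonneg_left (by linarith) (by positivity)
      linarith
    rw [ge_iff_le, le_div_iff₀ (by linarith : (0:ℝ) < w - a)] at hslope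
    nlinarith
  · have h1 : c w ≤ f w := env_le_self hf hL hab.le hw
    have h2 := quad_upper hf hL a w
    rw [hca]
    linarith

lemma deriv_at_b_acc (hf : Differentiable ℝ f) (hL : LipschitzWith L (deriv f)) (hab : a < b)
    (hacc : ∀ ε > (0:ℝ), ∃ z, z ∈ Icc a b ∧ convEnv f a b z = f z ∧ b - ε < z ∧ z < b) :
    HasDerivWithinAt (convEnv f a b) (deriv f b) (Icc a b) b := by
  set c := convEnv f a b with hcdef
  have hconv := env_convexOn hf hL hab.le
  have hcb : c b = f b := env_eq_b hf hL hab.le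
  have hbI : b ∈ Icc a b := right_mem_Icc.2 hab.le
  apply hasDerivWithinAt_of_quad (C := (L:ℝ)/2)
  intro w hw
  rw [abs_le]
  constructor
  · rcases eq_or_lt_of_le hw.2 with rfl | hwb
    · simp
    obtain ⟨z, hzI, hzc, hbz, hzb⟩ := hacc (b - w) (by linarith)
    have hwz : w < z := by linarith
    have hsec := hconv.secant_mono hbI hw hzI (ne_of_lt hwb) (ne_of_lt hzb) hwz.le
    -- (c w - c b)/(w - b) ≤ (c z - c b)/(z - b)
    have hfz : (c z - c b)/(z - b) ≤ deriv f b + L/2 * (b - z) := by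
      have h2 := quad_lower hf hL b z
      rw [hzc, hcb]
      rw [div_le_iff_of_neg (by linarith : z - b < 0)]
      nlinarith
    have hslope : (c w - c b)/(w - b) ≤ deriv f b + L/2 * (b - w) := by
      have : (L:ℝ)/2 * (b - z) ≤ (L:ℝ)/2 * (b - w) :=
        mul_le_mul_of_nonneg_left (by linarith) (by positivity)
      linarith
    rw [div_le_iff_of_neg (by linarith : w - b < 0)] at hslope
    nlinarith
  · have h1 : c w ≤ f w := env_le_self hf hL hab.le hw
    have h2 := quad_upper hf hL b w
    rw [hcb]
    linarith

end CEnvD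

namespace CEnvE

open CEnv CEnvB CEnvC CEnvD Filter Topology

variable {f : ℝ → ℝ} {a b : ℝ} {L : NNReal}

/-- Near an interior non-contact point, the envelope is affine. -/
lemma local_affine (hf : Differentiable ℝ f) (hL : LipschitzWith L (deriv f)) (hab : a < b)
    {m : ℝ} (hm : m ∈ Ioo a b) (hlt : convEnv f a b m < f m) :
    ∃ r > (0:ℝ), a < m - r ∧ m + r < b ∧
      ∀ w ∈ Icc (m - r) (m + r),
        convEnv f a b w = convEnv f a b (m - r) +
          (convEnv f a b (m + r) - convEnv f a b (m - r)) / (2 * r) * (w - (m - r)) := by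
  set c := convEnv f a b with hcdef
  have hconv := env_convexOn hf hL hab.le
  set δ := f m - c m with hδdef
  have hδ : 0 < δ := by simp only [hδdef]; linarith
  have hcont : ContinuousOn c (Ioo a b) :=
    (hconv.subset Ioo_subset_Icc_self (convex_Ioo a b)).continuousOn isOpen_Ioo
  have hcA : ContinuousAt c m := (hcont m hm).continuousAt (isOpen_Ioo.mem_nhds hm)
  have hfA : ContinuousAt f m := hf.continuous.continuousAt
  obtain ⟨r₁, hr₁, h1⟩ := Metric.continuousAt_iff.1 hcA (δ/4) (by linarith)
  obtain ⟨r₂, hr₂, h2⟩ := Metric.continuousAt_iff.1 hfA (δ/4) (by linarith)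
  set r := min (min (r₁/2) (r₂/2)) (min ((m - a)/2) ((b - m)/2)) with hrdef
  have hr : 0 < r := by
    apply lt_min (lt_min (by linarith) (by linarith))
    apply lt_min
    · have := hm.1; linarith
    · have := hm.2; linarith
  have hra : a < m - r := by
    have : r ≤ (m - a)/2 := le_trans (min_le_right _ _) (min_le_left _ _)
    have := hm.1; linarith
  have hrb : m + r < b := by
    have : r ≤ (b - m)/2 := le_trans (min_le_right _ _) (min_le_right _ _)
    have := hm.2; linarith
  have hrr₁ : r < r₁ := by
    have : r ≤ r₁/2 := le_trans (min_le_left _ _) (min_le_left _ _); linarith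
  have hrr₂ : r < r₂ := by
    have : r ≤ r₂/2 := le_trans (min_le_left _ _) (min_le_right _ _); linarith
  have hJIcc : ∀ w ∈ Icc (m - r) (m + r), w ∈ Icc a b := fun w hw =>
    ⟨by linarith [hw.1], by linarith [hw.2]⟩
  have hcclose : ∀ w ∈ Icc (m - r) (m + r), |c w - c m| < δ/4 := by
    intro w hw
    have hd : dist w m < r₁ := by
      rw [Real.dist_eq, abs_lt]; constructor
      · linarith [hw.1]
      · linarith [hw.2]
    have := h1 hd
    rwa [Real.dist_eq] at this
  have hfclose : ∀ w ∈ Icc (m - r) (m + r), |f w - f m| < δ/4 := by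
    intro w hw
    have hd : dist w m < r₂ := by
      rw [Real.dist_eq, abs_lt]; constructor
      · linarith [hw.1]
      · linarith [hw.2]
    have := h2 hd
    rwa [Real.dist_eq] at this
  set σ := (c (m + r) - c (m - r)) / (2 * r) with hσdef
  set ℓ : ℝ → ℝ := fun w => c (m - r) + σ * (w - (m - r)) with hℓdef
  have h2r : (0:ℝ) < 2 * r := by positivity
  have hcRid : c (m + r) = c (m - r) + σ * (2 * r) := by
    have h := div_mul_cancel₀ (c (m + r) - c (m - r)) (ne_of_gt h2r)
    rw [hσdef]; linarith
  have hmemp : m - r ∈ Icc a b := ⟨hra.le, by linarith⟩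
  have hmemq : m + r ∈ Icc a b := ⟨by linarith, hrb.le⟩
  -- c ≤ ℓ on J
  have hchord : ∀ w ∈ Icc (m - r) (m + r), c w ≤ ℓ w := by
    intro w hw
    rcases eq_or_lt_of_le hw.1 with rfl | hlw
    · simp [hℓdef]
    rcases eq_or_lt_of_le hw.2 with heq | hwr
    · rw [heq]
      show c (m + r) ≤ c (m - r) + σ * ((m + r) - (m - r))
      rw [hcRid]
      exact le_of_eq (by ring)
    have key := hconv.secant_mono_aux1 hmemp hmemq hlw hwr
    show c w ≤ c (m - r) + σ * (w - (m - r))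
    rw [hσdef, div_mul_eq_mul_div, ← sub_le_iff_le_add', le_div_iff₀ h2r]
    nlinarith [key]
  -- ℓ ≤ f on J
  have hℓf : ∀ w ∈ Icc (m - r) (m + r), ℓ w ≤ f w := by
    intro w hw
    have hL1 := abs_lt.1 (hcclose (m - r) ⟨le_refl _, by linarith⟩)
    have hL2 := abs_lt.1 (hcclose (m + r) ⟨by linarith, le_refl _⟩)
    have hF := abs_lt.1 (hfclose w hw)
    have hmax : ℓ w ≤ max (c (m - r)) (c (m + r)) := by
      rcases le_total σ 0 with hσ | hσ
      · have : σ * (w - (m - r)) ≤ 0 := mul_nonpos_of_nonpos_of_nonneg hσ (by linarith [hw.1])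
        have : ℓ w ≤ c (m - r) := by simp only [hℓdef]; linarith
        exact le_trans this (le_max_left _ _)
      · have hle : σ * (w - (m - r)) ≤ σ * (2 * r) := by
          apply mul_le_mul_of_nonneg_left _ hσ
          linarith [hw.2]
        have : ℓ w ≤ c (m + r) := by
          simp only [hℓdef]; rw [hcRid]; linarith
        exact le_trans this (le_max_right _ _)
    have hmaxlt : max (c (m - r)) (c (m + r)) ≤ c m + δ/4 :=
      max_le (by linarith [hL1.2]) (by linarith [hL2.2])
    have : c m + δ = f m := by simp only [hδdef]; ring
    linarith [hF.1]
  -- ℓ ≤ c outside J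
  have hout : ∀ w ∈ Icc a b, w ∉ Icc (m - r) (m + r) → ℓ w ≤ c w := by
    intro w hw hnot
    rw [mem_Icc, not_and_or] at hnot
    rcases hnot with hlt' | hgt'
    · push_neg at hlt'
      -- w < m - r
      have hsec := hconv.secant_mono hmemq hw hmemp
        (by intro hh; rw [hh] at hlt'; linarith) (by intro hh; linarith)
        (by linarith)
      -- (c w - c (m+r))/(w - (m+r)) ≤ (c (m-r) - c(m+r))/((m-r)-(m+r))
      have hid : (c (m - r) - c (m + r))/((m - r) - (m + r)) = σ := by
        rw [show m - r - (m + r) = -(2*r) by ring, hσdef]; ring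
      rw [hid] at hsec
      rw [div_le_iff_of_neg (by linarith : w - (m + r) < 0)] at hsec
      -- σ * (w - (m+r)) ≤ c w - c (m+r)
      show c (m - r) + σ * (w - (m - r)) ≤ c w
      nlinarith [hsec, hcRid]
    · push_neg at hgt'
      -- m + r < w
      have hsec := hconv.secant_mono hmemp hmemq hw
        (by intro hh; linarith) (by intro hh; rw [hh] at hgt'; linarith)
        (by linarith)
      have hid : (c (m + r) - c (m - r))/((m + r) - (m - r)) = σ := by
        rw [show m + r - (m - r) = 2*r by ring, hσdef]
      rw [hid] at hsec
      rw [le_div_iff₀ (by linarith : (0:ℝ) < w - (m - r))] at hsec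
      show c (m - r) + σ * (w - (m - r)) ≤ c w
      linarith
  -- the competitor max(c, ℓ)
  have hℓconv : ConvexOn ℝ (Icc a b) ℓ := by
    have := convexOn_affine (Icc a b) (convex_Icc a b) σ (c (m - r) - σ * (m - r))
    convert this using 1
    funext w
    simp only [hℓdef]; ring
  have hgc : ConvexOn ℝ (Icc a b) (c ⊔ ℓ) := hconv.sup hℓconv
  have hgle : ∀ x ∈ Icc a b, (c ⊔ ℓ) x ≤ f x := by
    intro x hx
    have hcf : c x ≤ f x := env_le_self hf hL hab.le hx
    by_cases hxJ : x ∈ Icc (m - r) (m + r)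
    · exact max_le hcf (hℓf x hxJ)
    · exact max_le hcf (le_trans (hout x hx hxJ) hcf)
  have henv : ∀ w ∈ Icc (m - r) (m + r), ℓ w ≤ c w := by
    intro w hw
    have := le_env (f := f) hgc hgle (hJIcc w hw)
    calc ℓ w ≤ (c ⊔ ℓ) w := le_max_right _ _
      _ ≤ convEnv f a b w := this
  refine ⟨r, hr, hra, hrb, fun w hw => le_antisymm (hchord w hw) (henv w hw)⟩

end CEnvE

namespace CEnvF

open CEnv CEnvB CEnvC CEnvD CEnvE Filter Topology

variable {f : ℝ → ℝ} {a b : ℝ} {L : NNReal}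

/-- On a gap (interval free of contact points), the envelope is affine. -/
lemma affine_on_gap (hf : Differentiable ℝ f) (hL : LipschitzWith L (deriv f)) (hab : a < b)
    {p q : ℝ} (hp : p ∈ Icc a b) (hq : q ∈ Icc a b) (hpq : p < q)
    (hgap : ∀ z ∈ Ioo p q, convEnv f a b z < f z) :
    ∀ w ∈ Icc p q, convEnv f a b w =
      convEnv f a b p + (convEnv f a b q - convEnv f a b p) / (q - p) * (w - p) := by
  set c := convEnv f a b with hcdef
  have hconv := env_convexOn hf hL hab.le
  have hqp : (0:ℝ) < q - p := by linarith
  set σ := (c q - c p) / (q - p) with hσdef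
  set ℓ : ℝ → ℝ := fun w => c p + σ * (w - p) with hℓdef
  have hcq : c q = c p + σ * (q - p) := by
    have h := div_mul_cancel₀ (c q - c p) (ne_of_gt hqp)
    rw [hσdef]; linarith
  have hsubI : Icc p q ⊆ Icc a b := Icc_subset_Icc hp.1 hq.2
  -- c ≤ ℓ on [p,q]
  have hchord : ∀ w ∈ Icc p q, c w ≤ ℓ w := by
    intro w hw
    rcases eq_or_lt_of_le hw.1 with rfl | hlw
    · simp [hℓdef]
    rcases eq_or_lt_of_le hw.2 with heq | hwr
    · rw [heq]
      show c q ≤ c p + σ * (q - p)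
      rw [hcq]
    have key := hconv.secant_mono_aux1 hp hq hlw hwr
    show c w ≤ c p + σ * (w - p)
    rw [hσdef, div_mul_eq_mul_div, ← sub_le_iff_le_add', le_div_iff₀ hqp]
    nlinarith [key]
  -- h := ℓ - c  is ≤ 0 on [p,q]
  have hcontc : ContinuousOn c (Icc a b) := env_continuousOn hf hL hab
  have hconth : ContinuousOn (fun w => ℓ w - c w) (Icc p q) := by
    apply ContinuousOn.sub
    · apply Continuous.continuousOn; simp only [hℓdef]; fun_prop
    · exact hcontc.mono hsubI
  have hkey : ∀ w ∈ Icc p q, ℓ w - c w ≤ 0 := by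
    by_contra hcon
    push_neg at hcon
    obtain ⟨w₀, hw₀, hw₀pos⟩ := hcon
    obtain ⟨wst, hwstI, hmax⟩ := isCompact_Icc.exists_isMaxOn (nonempty_Icc.2 hpq.le) hconth
    set M := ℓ wst - c wst with hMdef
    have hM : 0 < M := lt_of_lt_of_le hw₀pos (hmax hw₀)
    have hhp : ℓ p - c p = 0 := by simp [hℓdef]
    have hhq : ℓ q - c q = 0 := by
      have h' : ℓ q = c p + σ * (q - p) := by simp [hℓdef]
      rw [h', ← hcq, sub_self]
    have hwstp : p < wst := by
      rcases eq_or_lt_of_le hwstI.1 with heq | h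
      · exfalso
        rw [hMdef, ← heq] at hM
        rw [hhp] at hM
        exact lt_irrefl 0 hM
      · exact h
    have hwstq : wst < q := by
      rcases eq_or_lt_of_le hwstI.2 with heq | h
      · exfalso; rw [hMdef, heq, hhq] at hM; exact lt_irrefl 0 hM
      · exact h
    -- the set of maximizers to the right of wst
    set S := {w ∈ Icc wst q | ℓ w - c w = M} with hSdef
    have hScl : IsClosed S := by
      have := ContinuousOn.preimage_isClosed_of_isClosed
        (hconth.mono (Icc_subset_Icc hwstI.1 (le_refl q))) isClosed_Icc
        (isClosed_singleton (x := M))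
      convert this using 1
      rfl
    have hScomp : IsCompact S := isCompact_Icc.of_isClosed_subset hScl (fun w hw => hw.1)
    have hSne : S.Nonempty := ⟨wst, ⟨le_refl _, hwstq.le⟩, rfl⟩
    set w₁ := sSup S with hw₁def
    have hw₁S : w₁ ∈ S := hScomp.sSup_mem hSne
    have hw₁I : w₁ ∈ Icc wst q := hw₁S.1
    have hw₁M : ℓ w₁ - c w₁ = M := hw₁S.2
    have hw₁q : w₁ < q := by
      rcases eq_or_lt_of_le hw₁I.2 with heq | h
      · exfalso; rw [heq, hhq] at hw₁M; rw [← hw₁M] at hM; exact lt_irrefl 0 hM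
      · exact h
    have hw₁p : p < w₁ := lt_of_lt_of_le hwstp hw₁I.1
    have hw₁ab : w₁ ∈ Ioo a b := ⟨lt_of_le_of_lt hp.1 hw₁p, lt_of_lt_of_le hw₁q hq.2⟩
    have hw₁lt : c w₁ < f w₁ := hgap w₁ ⟨hw₁p, hw₁q⟩
    obtain ⟨r, hr, hra', hrb', haff⟩ := local_affine hf hL hab hw₁ab hw₁lt
    set r'' := min r (min (q - w₁) (w₁ - p)) with hr''def
    have hr'' : 0 < r'' := by
      apply lt_min hr
      apply lt_min <;> linarith
    have hr''r : r'' ≤ r := min_le_left _ _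
    have hr''q : r'' ≤ q - w₁ := le_trans (min_le_right _ _) (min_le_left _ _)
    have hr''p : r'' ≤ w₁ - p := le_trans (min_le_right _ _) (min_le_right _ _)
    -- affine sum identity
    have hmem1 : w₁ - r'' ∈ Icc (w₁ - r) (w₁ + r) := ⟨by linarith, by linarith⟩
    have hmem2 : w₁ + r'' ∈ Icc (w₁ - r) (w₁ + r) := ⟨by linarith, by linarith⟩
    have hmem0 : w₁ ∈ Icc (w₁ - r) (w₁ + r) := ⟨by linarith, by linarith⟩
    have hsum : c (w₁ - r'') + c (w₁ + r'') = 2 * c w₁ := by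
      have e0 := haff _ hmem0
      have e1 := haff _ hmem1
      have e2 := haff _ hmem2
      rw [hcdef]
      rw [e0, e1, e2]; ring
    have hℓsum : ℓ (w₁ - r'') + ℓ (w₁ + r'') = 2 * ℓ w₁ := by
      simp only [hℓdef]; ring
    have hmemL : w₁ - r'' ∈ Icc p q := ⟨by linarith, by linarith⟩
    have hmemR : w₁ + r'' ∈ Icc p q := ⟨by linarith, by linarith⟩
    have hLle : ℓ (w₁ - r'') - c (w₁ - r'') ≤ M := hmax hmemL
    have hRle : ℓ (w₁ + r'') - c (w₁ + r'') ≤ M := hmax hmemR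
    have hReq : ℓ (w₁ + r'') - c (w₁ + r'') = M := by linarith
    have hmemS : w₁ + r'' ∈ S := ⟨⟨by linarith [hw₁I.1], by linarith⟩, hReq⟩
    have : w₁ + r'' ≤ w₁ := le_csSup hScomp.bddAbove hmemS
    linarith
  intro w hw
  have h1 := hkey w hw
  simp only [hℓdef] at h1
  exact le_antisymm (hchord w hw) (by linarith)

end CEnvF

namespace CEnvG

open CEnv CEnvB CEnvC CEnvD CEnvE CEnvF Filter Topology

variable {f : ℝ → ℝ} {a b : ℝ} {L : NNReal}

lemma affine_piece_deriv (hab : a < b) {c : ℝ → ℝ} {p q σ : ℝ}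
    (hp : p ∈ Icc a b) (hq : q ∈ Icc a b) (hpq : p < q)
    (haff : ∀ w ∈ Icc p q, c w = c p + σ * (w - p)) :
    (∀ w ∈ Ioo p q, HasDerivWithinAt c σ (Icc a b) w ∧ derivWithin c (Icc a b) w = σ) ∧
    (p = a → HasDerivWithinAt c σ (Icc a b) a) ∧
    (q = b → HasDerivWithinAt c σ (Icc a b) b) := by
  set g : ℝ → ℝ := fun w => c p + σ * (w - p) with hgdef
  have hg : ∀ x : ℝ, HasDerivAt g σ x := by
    intro x
    have h1 : HasDerivAt (fun w : ℝ => w - p) 1 x := (hasDerivAt_id x).sub_const p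
    have h2 := (h1.const_mul σ).const_add (c p)
    simpa [hgdef] using h2
  have hsubIcc : Icc p q ⊆ Icc a b := Icc_subset_Icc hp.1 hq.2
  refine ⟨?_, ?_, ?_⟩
  · intro w hw
    have hmem : Ioo p q ∈ nhds w := isOpen_Ioo.mem_nhds hw
    have hev : c =ᶠ[nhds w] g :=
      Filter.eventually_of_mem hmem (fun z hz => haff z (Ioo_subset_Icc_self hz))
    have hder : HasDerivAt c σ w := (hg w).congr_of_eventuallyEq hev
    have hwI : w ∈ Icc a b := hsubIcc (Ioo_subset_Icc_self hw)
    exact ⟨hder.hasDerivWithinAt,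
      hder.hasDerivWithinAt.derivWithin (uniqueDiffOn_Icc hab w hwI)⟩
  · rintro rfl
    have hev : c =ᶠ[nhdsWithin p (Icc p b)] g := by
      have h1 : Iio q ∈ nhdsWithin p (Icc p b) :=
        mem_nhdsWithin_of_mem_nhds (Iio_mem_nhds hpq)
      have h2 : Icc p b ∈ nhdsWithin p (Icc p b) := self_mem_nhdsWithin
      filter_upwards [h1, h2] with z hz1 hz2
      exact haff z ⟨hz2.1, le_of_lt hz1⟩
    have heq : c p = g p := by
      have := haff p ⟨le_refl p, hpq.le⟩; simpa [hgdef] using this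
    exact ((hg p).hasDerivWithinAt).congr_of_eventuallyEq hev heq
  · rintro rfl
    have hev : c =ᶠ[nhdsWithin q (Icc a q)] g := by
      have h1 : Ioi p ∈ nhdsWithin q (Icc a q) :=
        mem_nhdsWithin_of_mem_nhds (Ioi_mem_nhds hpq)
      have h2 : Icc a q ∈ nhdsWithin q (Icc a q) := self_mem_nhdsWithin
      filter_upwards [h1, h2] with z hz1 hz2
      exact haff z ⟨le_of_lt hz1, hz2.2⟩
    have heq : c q = g q := haff q ⟨hpq.le, le_refl q⟩
    exact ((hg q).hasDerivWithinAt).congr_of_eventuallyEq hev heq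

lemma sigma_ge_f'b (hf : Differentiable ℝ f) (hL : LipschitzWith L (deriv f)) (hab : a < b)
    {p σ : ℝ} (hp : p ∈ Icc a b) (hpb : p < b)
    (hslope : ∀ w ∈ Ico p b, convEnv f a b b - convEnv f a b w = σ * (b - w)) :
    deriv f b ≤ σ := by
  apply le_of_forall_pos_le_add
  intro ε hε
  set w := max p (b - 2 * ε / (L + 1)) with hwdef
  have hwb : w < b := by
    apply max_lt hpb
    have : 0 < 2 * ε / ((L:ℝ) + 1) := by positivity
    linarith
  have hwI : w ∈ Ico p b := ⟨le_max_left _ _, hwb⟩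
  have hwIcc : w ∈ Icc a b := ⟨le_trans hp.1 (le_max_left _ _), hwb.le⟩
  have hs := hslope w hwI
  have h1 : convEnv f a b w ≤ f w := env_le_self hf hL hab.le hwIcc
  have h2 : convEnv f a b b = f b := env_eq_b hf hL hab.le
  have h3 := quad_upper hf hL b w
  -- σ * (b - w) ≥ f' b * (b - w) - L/2 (b - w)^2
  have h4 : σ * (b - w) ≥ deriv f b * (b - w) - L/2 * (b - w)^2 := by
    rw [← hs, h2]; nlinarith [h3]
  have h5 : σ ≥ deriv f b - L/2 * (b - w) := by
    have hbw : 0 < b - w := by linarith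
    rw [ge_iff_le, ← sub_nonneg] at h4 ⊢
    by_contra hcon
    push_neg at hcon
    nlinarith [h4]
  have h6 : (L:ℝ)/2 * (b - w) ≤ ε := by
    apply half_bound L _ hε
    have := le_max_right p (b - 2 * ε / ((L:ℝ) + 1))
    simp only [hwdef]; linarith
  linarith

lemma sigma_le_f'a (hf : Differentiable ℝ f) (hL : LipschitzWith L (deriv f)) (hab : a < b)
    {q σ : ℝ} (hq : q ∈ Icc a b) (haq : a < q)
    (hslope : ∀ w ∈ Ioc a q, convEnv f a b w - convEnv f a b a = σ * (w - a)) :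
    σ ≤ deriv f a := by
  apply le_of_forall_pos_le_add
  intro ε hε
  set w := min q (a + 2 * ε / (L + 1)) with hwdef
  have hwa : a < w := by
    apply lt_min haq
    have : 0 < 2 * ε / ((L:ℝ) + 1) := by positivity
    linarith
  have hwI : w ∈ Ioc a q := ⟨hwa, min_le_left _ _⟩
  have hwIcc : w ∈ Icc a b := ⟨hwa.le, le_trans (min_le_left _ _) hq.2⟩
  have hs := hslope w hwI
  have h1 : convEnv f a b w ≤ f w := env_le_self hf hL hab.le hwIcc
  have h2 : convEnv f a b a = f a := env_eq_a hf hL hab.le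
  have h3 := quad_upper hf hL a w
  have h4 : σ * (w - a) ≤ deriv f a * (w - a) + L/2 * (w - a)^2 := by
    rw [← hs, h2]; nlinarith [h3]
  have h5 : σ ≤ deriv f a + L/2 * (w - a) := by
    have hwa' : 0 < w - a := by linarith
    by_contra hcon
    push_neg at hcon
    nlinarith [h4]
  have h6 : (L:ℝ)/2 * (w - a) ≤ ε := by
    apply half_bound L _ hε
    have := min_le_right q (a + 2 * ε / ((L:ℝ) + 1))
    simp only [hwdef]; linarith
  linarith

lemma contact_isClosed (hf : Differentiable ℝ f) (hL : LipschitzWith L (deriv f)) (hab : a < b) :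
    IsClosed {z | z ∈ Icc a b ∧ convEnv f a b z = f z} := by
  have hcont : ContinuousOn (fun z => convEnv f a b z - f z) (Icc a b) :=
    (env_continuousOn hf hL hab).sub (hf.continuous.continuousOn)
  have := ContinuousOn.preimage_isClosed_of_isClosed hcont isClosed_Icc
    (isClosed_singleton (x := (0:ℝ)))
  convert this using 1
  ext z
  simp only [Set.mem_setOf_eq, Set.mem_inter_iff, Set.mem_preimage, Set.mem_singleton_iff]
  constructor
  · rintro ⟨h1, h2⟩; exact ⟨h1, by rw [h2]; ring⟩
  · rintro ⟨h1, h2⟩; exact ⟨h1, by linarith⟩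

end CEnvG

namespace CEnvH

open CEnv CEnvB CEnvC CEnvD CEnvE CEnvF CEnvG Filter Topology

variable {f : ℝ → ℝ} {a b : ℝ} {L : NNReal}

/-- Master structure lemma: at every point the envelope is differentiable (within `Icc a b`),
and its derivative is pinched by values `deriv f z` at contact points on each side, with the
derivative constant between the point and those contact points. -/
lemma master (hf : Differentiable ℝ f) (hL : LipschitzWith L (deriv f)) (hab : a < b)
    {u : ℝ} (hu : u ∈ Icc a b) :
    DifferentiableWithinAt ℝ (convEnv f a b) (Icc a b) u ∧
    (∃ z ∈ Icc a b, convEnv f a b z = f z ∧ u ≤ z ∧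
      deriv f z ≤ derivWithin (convEnv f a b) (Icc a b) u ∧
      ∀ w ∈ Ico u z, derivWithin (convEnv f a b) (Icc a b) w
        = derivWithin (convEnv f a b) (Icc a b) u) ∧
    (∃ z ∈ Icc a b, convEnv f a b z = f z ∧ z ≤ u ∧
      derivWithin (convEnv f a b) (Icc a b) u ≤ deriv f z ∧
      ∀ w ∈ Ioc z u, derivWithin (convEnv f a b) (Icc a b) w
        = derivWithin (convEnv f a b) (Icc a b) u) := by
  have huDiff := uniqueDiffOn_Icc hab
  have haI : a ∈ Icc a b := left_mem_Icc.2 hab.le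
  have hbI : b ∈ Icc a b := right_mem_Icc.2 hab.le
  have hca : convEnv f a b a = f a := env_eq_a hf hL hab.le
  have hcb : convEnv f a b b = f b := env_eq_b hf hL hab.le
  rcases eq_or_lt_of_le hu.1 with rfl | hau
  · -- a = a
    set S := {z | z ∈ Icc a b ∧ convEnv f a b z = f z} ∩ Ioc a b with hSdef
    have hSne : S.Nonempty := ⟨b, ⟨hbI, hcb⟩, ⟨hab, le_refl b⟩⟩
    have hbdd : BddBelow S := ⟨a, fun z hz => hz.2.1.le⟩
    set q' := sInf S with hq'def
    have hq'K : q' ∈ Icc a b ∧ convEnv f a b q' = f q' := by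
      have h1 : q' ∈ closure S := csInf_mem_closure hSne hbdd
      have h2 : closure S ⊆ {z | z ∈ Icc a b ∧ convEnv f a b z = f z} := by
        rw [← (contact_isClosed hf hL hab).closure_eq]
        exact closure_mono inter_subset_left
      exact h2 h1
    have hq'lb : a ≤ q' := le_csInf hSne (fun z hz => hz.2.1.le)
    rcases eq_or_lt_of_le hq'lb with heq | haq'
    · -- contacts accumulate at a
      have hacc : ∀ ε > (0:ℝ), ∃ z, z ∈ Icc a b ∧ convEnv f a b z = f z ∧ a < z ∧ z < a + ε := by
        intro ε hε
        have hlt : sInf S < a + ε := by rw [← hq'def, ← heq]; linarith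
        obtain ⟨z, hzS, hz⟩ := exists_lt_of_csInf_lt hSne hlt
        exact ⟨z, hzS.1.1, hzS.1.2, hzS.2.1, hz⟩
      have hder := deriv_at_a_acc hf hL hab hacc
      have hD : derivWithin (convEnv f a b) (Icc a b) a = deriv f a :=
        hder.derivWithin (huDiff a hu)
      refine ⟨hder.differentiableWithinAt,
        ⟨a, hu, hca, le_refl a, by rw [hD], fun w hw => by simp at hw⟩,
        ⟨a, hu, hca, le_refl a, by rw [hD], fun w hw => by simp at hw⟩⟩
    · -- affine piece [a, q']
      have hq'I : q' ∈ Icc a b := hq'K.1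
      have hgap : ∀ z ∈ Ioo a q', convEnv f a b z < f z := by
        intro z hz
        have hzI : z ∈ Icc a b := ⟨hz.1.le, le_trans hz.2.le hq'I.2⟩
        rcases eq_or_lt_of_le (env_le_self hf hL hab.le hzI) with heq2 | h
        · exfalso
          have hzS : z ∈ S := ⟨⟨hzI, heq2⟩, ⟨hz.1, hzI.2⟩⟩
          have := csInf_le hbdd hzS
          rw [← hq'def] at this
          linarith [hz.2]
        · exact h
      have haff := affine_on_gap hf hL hab haI hq'I haq' hgap
      set σ := (convEnv f a b q' - convEnv f a b a) / (q' - a) with hσdef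
      have hpieces := affine_piece_deriv hab haI hq'I haq' haff
      have hderA : HasDerivWithinAt (convEnv f a b) σ (Icc a b) a := hpieces.2.1 rfl
      have hDa : derivWithin (convEnv f a b) (Icc a b) a = σ :=
        hderA.derivWithin (huDiff a hu)
      have hconst : ∀ w ∈ Ico a q',
          derivWithin (convEnv f a b) (Icc a b) w = σ := by
        intro w hw
        rcases eq_or_lt_of_le hw.1 with rfl | hwa
        · exact hDa
        · exact (hpieces.1 w ⟨hwa, hw.2⟩).2
      have hbound : deriv f q' ≤ σ := by
        rcases eq_or_lt_of_le hq'I.2 with hqb | hqb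
        · -- q' = b
          rw [hqb]
          apply sigma_ge_f'b hf hL hab haI hab
          intro w hw
          have hw1 : w ∈ Icc a q' := by rw [hqb]; exact ⟨hw.1, hw.2.le⟩
          have h1 := haff w hw1
          have h2 := haff q' (right_mem_Icc.2 haq'.le)
          rw [hqb] at h2
          rw [h2, h1]; ring
        · -- q' < b : interior contact
          have hcd := deriv_at_interior_contact hf hL hab ⟨haq', hqb⟩ hq'K.2
          have := slope_eq_deriv_left (σ := σ) haq' hcd
            (fun w hw => ⟨hw.1, le_trans hw.2.le hq'I.2⟩)
            (fun w hw => by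
              have h1 := haff w (Ico_subset_Icc_self hw)
              have h2 := haff q' (right_mem_Icc.2 haq'.le)
              rw [h1, h2]; ring)
          exact le_of_eq this.symm
      have hbound2 : σ ≤ deriv f a := by
        apply sigma_le_f'a hf hL hab hq'I haq'
        intro w hw
        have h1 := haff w ⟨hw.1.le, hw.2⟩
        rw [h1]; ring
      exact ⟨hderA.differentiableWithinAt,
        ⟨q', hq'I, hq'K.2, hq'lb, by rw [hDa]; exact hbound,
          fun w hw => by rw [hconst w hw, hDa]⟩,
        ⟨a, hu, hca, le_refl a, by rw [hDa]; exact hbound2, fun w hw => by simp at hw⟩⟩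
  rcases eq_or_lt_of_le hu.2 with rfl | hub
  · -- u = b
    set S := {z | z ∈ Icc a u ∧ convEnv f a u z = f z} ∩ Ico a u with hSdef
    have hSne : S.Nonempty := ⟨a, ⟨haI, hca⟩, ⟨le_refl a, hau⟩⟩
    have hbdd : BddAbove S := ⟨u, fun z hz => hz.2.2.le⟩
    set p' := sSup S with hp'def
    have hp'K : p' ∈ Icc a u ∧ convEnv f a u p' = f p' := by
      have h1 : p' ∈ closure S := csSup_mem_closure hSne hbdd
      have h2 : closure S ⊆ {z | z ∈ Icc a u ∧ convEnv f a u z = f z} := by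
        rw [← (contact_isClosed hf hL hab).closure_eq]
        exact closure_mono inter_subset_left
      exact h2 h1
    have hp'ub : p' ≤ u := csSup_le hSne (fun z hz => hz.2.2.le)
    rcases eq_or_lt_of_le hp'ub with heq | hpb'
    · -- contacts accumulate at b
      have hacc : ∀ ε > (0:ℝ), ∃ z, z ∈ Icc a u ∧ convEnv f a u z = f z ∧ u - ε < z ∧ z < u := by
        intro ε hε
        have hlt : u - ε < sSup S := by rw [← hp'def, heq]; linarith
        obtain ⟨z, hzS, hz⟩ := exists_lt_of_lt_csSup hSne hlt
        exact ⟨z, hzS.1.1, hzS.1.2, hz, hzS.2.2⟩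
      have hder := deriv_at_b_acc hf hL hab hacc
      have hD : derivWithin (convEnv f a u) (Icc a u) u = deriv f u :=
        hder.derivWithin (huDiff u hu)
      refine ⟨hder.differentiableWithinAt,
        ⟨u, hu, hcb, le_refl u, by rw [hD], fun w hw => by simp at hw⟩,
        ⟨u, hu, hcb, le_refl u, by rw [hD], fun w hw => by simp at hw⟩⟩
    · -- affine piece [p', b]
      have hp'I : p' ∈ Icc a u := hp'K.1
      have hgap : ∀ z ∈ Ioo p' u, convEnv f a u z < f z := by
        intro z hz
        have hzI : z ∈ Icc a u := ⟨le_trans hp'I.1 hz.1.le, hz.2.le⟩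
        rcases eq_or_lt_of_le (env_le_self hf hL hab.le hzI) with heq2 | h
        · exfalso
          have hzS : z ∈ S := ⟨⟨hzI, heq2⟩, ⟨hzI.1, hz.2⟩⟩
          have := le_csSup hbdd hzS
          rw [← hp'def] at this
          linarith [hz.1]
        · exact h
      have haff := affine_on_gap hf hL hab hp'I hbI hpb' hgap
      set σ := (convEnv f a u u - convEnv f a u p') / (u - p') with hσdef
      have hpieces := affine_piece_deriv hab hp'I hbI hpb' haff
      have hderB : HasDerivWithinAt (convEnv f a u) σ (Icc a u) u := hpieces.2.2 rfl
      have hDb : derivWithin (convEnv f a u) (Icc a u) u = σ :=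
        hderB.derivWithin (huDiff u hu)
      have hconst : ∀ w ∈ Ioc p' u,
          derivWithin (convEnv f a u) (Icc a u) w = σ := by
        intro w hw
        rcases eq_or_lt_of_le hw.2 with rfl | hwb
        · exact hDb
        · exact (hpieces.1 w ⟨hw.1, hwb⟩).2
      have hbound : deriv f u ≤ σ := by
        apply sigma_ge_f'b hf hL hab hp'I hpb'
        intro w hw
        have h1 := haff w ⟨hw.1, hw.2.le⟩
        have h2 := haff u (right_mem_Icc.2 hpb'.le)
        rw [h1, h2]; ring
      have hbound2 : σ ≤ deriv f p' := by
        rcases eq_or_lt_of_le hp'I.1 with hpa | hpa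
        · -- p' = a
          rw [← hpa]
          apply sigma_le_f'a hf hL hab hbI (by rw [hpa]; exact hpb')
          intro w hw
          have hw1 : w ∈ Icc p' u := ⟨by rw [← hpa]; exact hw.1.le, hw.2⟩
          have h1 := haff w hw1
          rw [h1, ← hpa]; ring
        · -- a < p' : interior contact
          have hcd := deriv_at_interior_contact hf hL hab ⟨hpa, hpb'⟩ hp'K.2
          have := slope_eq_deriv_right (σ := σ) hpb' hcd
            (fun w hw => ⟨le_trans hp'I.1 hw.1.le, hw.2⟩)
            (fun w hw => haff w (Ioc_subset_Icc_self hw))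
          exact le_of_eq this
      exact ⟨hderB.differentiableWithinAt,
        ⟨u, hu, hcb, le_refl u, by rw [hDb]; exact hbound, fun w hw => by simp at hw⟩,
        ⟨p', ⟨hp'I.1, le_trans hp'I.2 hu.2⟩, hp'K.2, hp'ub,
          by rw [hDb]; exact hbound2,
          fun w hw => by rw [hconst w hw, hDb]⟩⟩
  -- now a < u < b
  by_cases hcu : convEnv f a b u = f u
  · -- interior contact
    have hder := deriv_at_interior_contact hf hL hab ⟨hau, hub⟩ hcu
    have hD : derivWithin (convEnv f a b) (Icc a b) u = deriv f u :=
      hder.derivWithin (huDiff u hu)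
    refine ⟨hder.differentiableWithinAt,
      ⟨u, hu, hcu, le_refl u, by rw [hD], fun w hw => by simp at hw⟩,
      ⟨u, hu, hcu, le_refl u, by rw [hD], fun w hw => by simp at hw⟩⟩
  · -- interior non-contact: affine piece [p, q] around u
    set SP := {z | z ∈ Icc a b ∧ convEnv f a b z = f z} ∩ Icc a u with hSPdef
    set SQ := {z | z ∈ Icc a b ∧ convEnv f a b z = f z} ∩ Icc u b with hSQdef
    have hSPne : SP.Nonempty := ⟨a, ⟨haI, hca⟩, ⟨le_refl a, hau.le⟩⟩
    have hSQne : SQ.Nonempty := ⟨b, ⟨hbI, hcb⟩, ⟨hub.le, le_refl b⟩⟩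
    have hSPbdd : BddAbove SP := ⟨u, fun z hz => hz.2.2⟩
    have hSQbdd : BddBelow SQ := ⟨u, fun z hz => hz.2.1⟩
    set p := sSup SP with hpdef
    set q := sInf SQ with hqdef
    have hpK : p ∈ Icc a b ∧ convEnv f a b p = f p := by
      have h1 : p ∈ closure SP := csSup_mem_closure hSPne hSPbdd
      have h2 : closure SP ⊆ {z | z ∈ Icc a b ∧ convEnv f a b z = f z} := by
        rw [← (contact_isClosed hf hL hab).closure_eq]
        exact closure_mono inter_subset_left
      exact h2 h1
    have hqK : q ∈ Icc a b ∧ convEnv f a b q = f q := by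
      have h1 : q ∈ closure SQ := csInf_mem_closure hSQne hSQbdd
      have h2 : closure SQ ⊆ {z | z ∈ Icc a b ∧ convEnv f a b z = f z} := by
        rw [← (contact_isClosed hf hL hab).closure_eq]
        exact closure_mono inter_subset_left
      exact h2 h1
    have hpu : p ≤ u := csSup_le hSPne (fun z hz => hz.2.2)
    have huq : u ≤ q := le_csInf hSQne (fun z hz => hz.2.1)
    have hpu' : p < u := lt_of_le_of_ne hpu (fun heq => hcu (by rw [← heq]; exact hpK.2))
    have huq' : u < q := lt_of_le_of_ne huq (fun heq => hcu (by rw [heq]; exact hqK.2))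
    have hpq : p < q := lt_trans hpu' huq'
    have hgap : ∀ z ∈ Ioo p q, convEnv f a b z < f z := by
      intro z hz
      have hzI : z ∈ Icc a b := ⟨le_trans hpK.1.1 hz.1.le, le_trans hz.2.le hqK.1.2⟩
      rcases eq_or_lt_of_le (env_le_self hf hL hab.le hzI) with heq2 | h
      · exfalso
        rcases le_total z u with hzu | huz
        · have hzS : z ∈ SP := ⟨⟨hzI, heq2⟩, ⟨hzI.1, hzu⟩⟩
          have := le_csSup hSPbdd hzS
          rw [← hpdef] at this
          linarith [hz.1]
        · have hzS : z ∈ SQ := ⟨⟨hzI, heq2⟩, ⟨huz, hzI.2⟩⟩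
          have := csInf_le hSQbdd hzS
          rw [← hqdef] at this
          linarith [hz.2]
      · exact h
    have haff := affine_on_gap hf hL hab hpK.1 hqK.1 hpq hgap
    set σ := (convEnv f a b q - convEnv f a b p) / (q - p) with hσdef
    have hpieces := affine_piece_deriv hab hpK.1 hqK.1 hpq haff
    have hderU : HasDerivWithinAt (convEnv f a b) σ (Icc a b) u :=
      (hpieces.1 u ⟨hpu', huq'⟩).1
    have hDu : derivWithin (convEnv f a b) (Icc a b) u = σ := (hpieces.1 u ⟨hpu', huq'⟩).2
    have hboundR : deriv f q ≤ σ := by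
      rcases eq_or_lt_of_le hqK.1.2 with hqb | hqb
      · rw [hqb]
        apply sigma_ge_f'b hf hL hab hpK.1 (by rw [← hqb]; exact hpq)
        intro w hw
        have hw1 : w ∈ Icc p q := ⟨hw.1, by rw [hqb]; exact hw.2.le⟩
        have h1 := haff w hw1
        have h2 := haff q (right_mem_Icc.2 hpq.le)
        rw [hqb] at h2
        rw [h2, h1]; ring
      · have haq : a < q := lt_trans hau huq'
        have hcd := deriv_at_interior_contact hf hL hab ⟨haq, hqb⟩ hqK.2
        have := slope_eq_deriv_left (σ := σ) hpq hcd
          (fun w hw => ⟨le_trans hpK.1.1 hw.1, le_trans hw.2.le hqK.1.2⟩)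
          (fun w hw => by
            have h1 := haff w (Ico_subset_Icc_self hw)
            have h2 := haff q (right_mem_Icc.2 hpq.le)
            rw [h1, h2]; ring)
        exact le_of_eq this.symm
    have hboundL : σ ≤ deriv f p := by
      rcases eq_or_lt_of_le hpK.1.1 with hpa | hpa
      · rw [← hpa]
        apply sigma_le_f'a hf hL hab hqK.1 (by rw [hpa]; exact hpq)
        intro w hw
        have hw1 : w ∈ Icc p q := ⟨by rw [← hpa]; exact hw.1.le, hw.2⟩
        have h1 := haff w hw1
        rw [h1, ← hpa]; ring
      · have hpb : p < b := lt_trans hpu' hub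
        have hcd := deriv_at_interior_contact hf hL hab ⟨hpa, hpb⟩ hpK.2
        have := slope_eq_deriv_right (σ := σ) hpq hcd
          (fun w hw => ⟨le_trans hpK.1.1 hw.1.le, le_trans hw.2 hqK.1.2⟩)
          (fun w hw => haff w (Ioc_subset_Icc_self hw))
        exact le_of_eq this
    refine ⟨hderU.differentiableWithinAt,
      ⟨q, hqK.1, hqK.2, huq, by rw [hDu]; exact hboundR,
        fun w hw => by
          rw [(hpieces.1 w ⟨lt_of_lt_of_le hpu' hw.1, hw.2⟩).2, hDu]⟩,
      ⟨p, hpK.1, hpK.2, hpu, by rw [hDu]; exact hboundL,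
        fun w hw => by
          rw [(hpieces.1 w ⟨hw.1, lt_of_le_of_lt hw.2 huq'⟩).2, hDu]⟩⟩

end CEnvH

open CEnv CEnvB CEnvC CEnvD CEnvE CEnvF CEnvG CEnvH in
theorem convEnv_deriv_lipschitz (f : ℝ → ℝ) (a b : ℝ) (L : NNReal)
    (hf : Differentiable ℝ f) (hL : LipschitzWith L (deriv f)) (hab : a < b) :
    LipschitzOnWith L
      (fun u => derivWithin (convEnv f a b) (Set.Icc a b) u) (Set.Icc a b) := by
  have hconv := env_convexOn hf hL hab.le
  -- monotonicity
  have hmono : ∀ x ∈ Icc a b, ∀ y ∈ Icc a b, x ≤ y →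
      derivWithin (convEnv f a b) (Icc a b) x ≤ derivWithin (convEnv f a b) (Icc a b) y := by
    intro x hx y hy hxy
    rcases eq_or_lt_of_le hxy with rfl | hxy'
    · exact le_refl _
    have hdx : DifferentiableWithinAt ℝ (convEnv f a b) (Icc a b) x :=
      (master hf hL hab hx).1
    have hdy : DifferentiableWithinAt ℝ (convEnv f a b) (Icc a b) y :=
      (master hf hL hab hy).1
    calc derivWithin (convEnv f a b) (Icc a b) x
        ≤ slope (convEnv f a b) x y := hconv.derivWithin_le_slope hx hy hxy' hdx
      _ ≤ derivWithin (convEnv f a b) (Icc a b) y :=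
          hconv.slope_le_derivWithin hx hy hxy' hdy
  -- quantitative bound
  have hquant : ∀ x ∈ Icc a b, ∀ y ∈ Icc a b, x < y →
      derivWithin (convEnv f a b) (Icc a b) y - derivWithin (convEnv f a b) (Icc a b) x
        ≤ L * (y - x) := by
    intro x hx y hy hxy
    obtain ⟨-, ⟨z₁, hz₁I, hz₁c, hxz₁, hfz₁, hconst₁⟩, -⟩ := master hf hL hab hx
    obtain ⟨-, -, ⟨z₂, hz₂I, hz₂c, hz₂y, hfz₂, hconst₂⟩⟩ := master hf hL hab hy
    have hLpos : (0:ℝ) ≤ L := NNReal.coe_nonneg L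
    rcases le_or_gt z₁ z₂ with hzz | hzz
    · -- the two contact points are in order
      have h1 : deriv f z₂ - deriv f z₁ ≤ L * (z₂ - z₁) := by
        have h := (abs_le.1 (lip_bound hL z₂ z₁)).2
        rwa [abs_of_nonneg (by linarith : (0:ℝ) ≤ z₂ - z₁)] at h
      have h2 : (L:ℝ) * (z₂ - z₁) ≤ L * (y - x) := by
        apply mul_le_mul_of_nonneg_left _ hLpos
        linarith
      linarith
    · -- overlapping pieces: the derivative is the same
      have heqD : derivWithin (convEnv f a b) (Icc a b) x
          = derivWithin (convEnv f a b) (Icc a b) y := by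
        rcases lt_or_ge z₂ x with hz₂x | hxz₂
        · exact hconst₂ x ⟨hz₂x, hxy.le⟩
        · rcases eq_or_lt_of_le hz₂y with heq | hz₂y'
          · refine (hconst₁ y ⟨hxy.le, ?_⟩).symm
            rw [← heq]; exact hzz
          · set w := (z₂ + min z₁ y)/2 with hwdef
            have hminw : z₂ < min z₁ y := lt_min hzz hz₂y'
            have hw1 : w ∈ Ico x z₁ := by
              constructor
              · have : z₂ < w := by
                  simp only [hwdef]; linarith
                linarith
              · have : w < min z₁ y := by simp only [hwdef]; linarith
                exact lt_of_lt_of_le this (min_le_left _ _)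
            have hw2 : w ∈ Ioc z₂ y := by
              constructor
              · simp only [hwdef]; linarith
              · have : w < min z₁ y := by simp only [hwdef]; linarith
                exact le_of_lt (lt_of_lt_of_le this (min_le_right _ _))
            rw [← hconst₁ w hw1, ← hconst₂ w hw2]
      rw [heqD]
      have : (0:ℝ) ≤ L * (y - x) := mul_nonneg hLpos (by linarith)
      linarith
  apply LipschitzOnWith.of_dist_le_mul
  intro x hx y hy
  simp only [Real.dist_eq]
  rcases le_total x y with hxy | hyx
  · rcases eq_or_lt_of_le hxy with rfl | hxy'
    · simp
    rw [abs_sub_comm, abs_of_nonneg (sub_nonneg.2 (hmono x hx y hy hxy)),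
      abs_sub_comm x y, abs_of_nonneg (sub_nonneg.2 hxy)]
    exact hquant x hx y hy hxy'
  · rcases eq_or_lt_of_le hyx with rfl | hyx'
    · simp
    rw [abs_of_nonneg (sub_nonneg.2 (hmono y hy x hx hyx)),
      abs_of_nonneg (sub_nonneg.2 hyx)]
    exact hquant y hy x hx hyx'
end

section
/- If ū ∈ (a,b) lies in a maximal shock interval (u₁,u₂) of the convex envelope of f on [a,b], then the convex envelope of f on [a,ū] coincides with the convex envelope of f on [a,b] on the interval [a,u₁]. -/
open Set

namespace CEAux

def ESet (f : ℝ → ℝ) (a b u : ℝ) : Set ℝ :=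
  {y : ℝ | ∃ g : ℝ → ℝ, ConvexOn ℝ (Set.Icc a b) g ∧
    (∀ x ∈ Set.Icc a b, g x ≤ f x) ∧ g u = y}

lemma convEnv_eq (f : ℝ → ℝ) (a b u : ℝ) : convEnv f a b u = sSup (ESet f a b u) := rfl

variable {f : ℝ → ℝ} {a b u : ℝ}

lemma bddAbove_ESet (hu : u ∈ Icc a b) : BddAbove (ESet f a b u) := by
  refine ⟨f u, ?_⟩
  rintro y ⟨g, hg, hgf, rfl⟩
  exact hgf u hu

lemma ESet_nonempty (hf : Continuous f) (hab : a ≤ b) (u : ℝ) : (ESet f a b u).Nonempty := by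
  obtain ⟨x₀, hx₀, hmin⟩ := isCompact_Icc.exists_isMinOn (nonempty_Icc.2 hab) hf.continuousOn
  exact ⟨f x₀, fun _ => f x₀, convexOn_const _ (convex_Icc a b), fun x hx => hmin hx, rfl⟩

lemma le_convEnv {g : ℝ → ℝ} (hg : ConvexOn ℝ (Icc a b) g) (hgf : ∀ x ∈ Icc a b, g x ≤ f x)
    (hu : u ∈ Icc a b) : g u ≤ convEnv f a b u :=
  le_csSup (bddAbove_ESet hu) ⟨g, hg, hgf, rfl⟩

lemma convEnv_le (hf : Continuous f) (hab : a ≤ b) (hu : u ∈ Icc a b) :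
    convEnv f a b u ≤ f u := by
  refine csSup_le (ESet_nonempty hf hab u) ?_
  rintro y ⟨g, hg, hgf, rfl⟩
  exact hgf u hu

lemma convexOn_convEnv (hf : Continuous f) (hab : a ≤ b) :
    ConvexOn ℝ (Icc a b) (convEnv f a b) := by
  refine ⟨convex_Icc a b, fun x hx y hy α β hα hβ hαβ => ?_⟩
  refine csSup_le (ESet_nonempty hf hab _) ?_
  rintro _ ⟨g, hg, hgf, rfl⟩
  have h1 : g x ≤ convEnv f a b x := le_convEnv hg hgf hx
  have h2 : g y ≤ convEnv f a b y := le_convEnv hg hgf hy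
  calc g (α • x + β • y) ≤ α • g x + β • g y := hg.2 hx hy hα hβ hαβ
    _ ≤ α • convEnv f a b x + β • convEnv f a b y := by
        simp only [smul_eq_mul]
        exact add_le_add (mul_le_mul_of_nonneg_left h1 hα) (mul_le_mul_of_nonneg_left h2 hβ)

lemma convexOn_affine (c m d : ℝ) {s : Set ℝ} (hs : Convex ℝ s) :
    ConvexOn ℝ s (fun x => c + m * (x - d)) := by
  refine ⟨hs, fun x _ y _ α β hα hβ hαβ => le_of_eq ?_⟩
  simp only [smul_eq_mul]
  linear_combination (m * d - c) * hαβ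

/-- supporting line for a convex function at an interior point -/
lemma exists_support {g : ℝ → ℝ} (hg : ConvexOn ℝ (Icc a b) g) (hau : a < u) (hub : u < b) :
    ∃ σ : ℝ, ∀ x ∈ Icc a b, g u + σ * (x - u) ≤ g x := by
  set S := (fun x => (g u - g x) / (u - x)) '' (Ico a u) with hS
  have hSne : S.Nonempty := ⟨_, ⟨a, ⟨le_refl a, hau⟩, rfl⟩⟩
  have key : ∀ x ∈ Ico a u, ∀ z ∈ Ioc u b,
      (g u - g x) / (u - x) ≤ (g z - g u) / (z - u) := by
    intro x hx z hz
    exact hg.slope_mono_adjacent ⟨hx.1, (hx.2.trans hub).le⟩ ⟨(hau.trans hz.1).le, hz.2⟩ hx.2 hz.1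
  have hbdd : BddAbove S := by
    refine ⟨(g b - g u) / (b - u), ?_⟩
    rintro _ ⟨x, hx, rfl⟩
    exact key x hx b ⟨hub, le_refl b⟩
  refine ⟨sSup S, fun x hx => ?_⟩
  rcases lt_trichotomy x u with h | h | h
  · have h1 : (g u - g x) / (u - x) ≤ sSup S := le_csSup hbdd ⟨x, ⟨hx.1, h⟩, rfl⟩
    rw [div_le_iff₀ (by linarith)] at h1
    nlinarith
  · subst h; simp
  · have h1 : sSup S ≤ (g x - g u) / (x - u) := by
      refine csSup_le hSne ?_
      rintro _ ⟨t, ht, rfl⟩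
      exact key t ht x ⟨h, hx.2⟩
    rw [le_div_iff₀ (by linarith)] at h1
    nlinarith

/-- there is a line through `(a, f a - ε)` below `f` on `[a,b]` -/
lemma exists_line (hf : Continuous f) (hab : a ≤ b) {ε : ℝ} (hε : 0 < ε) :
    ∃ K : ℝ, ∀ x ∈ Icc a b, f a - ε + K * (x - a) ≤ f x := by
  obtain ⟨x₀, hx₀, hmin⟩ := isCompact_Icc.exists_isMinOn (nonempty_Icc.2 hab) hf.continuousOn
  obtain ⟨δ, hδ, hball⟩ := Metric.continuous_iff.mp hf a ε hε
  refine ⟨min 0 ((f x₀ - f a) / δ), fun x hx => ?_⟩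
  have hxa : 0 ≤ x - a := by linarith [hx.1]
  have hK0 : min 0 ((f x₀ - f a) / δ) ≤ 0 := min_le_left _ _
  by_cases hcl : x - a < δ
  · have hd : dist x a < δ := by rw [Real.dist_eq, abs_of_nonneg hxa]; exact hcl
    have h2 := hball x hd
    rw [Real.dist_eq] at h2
    have h3 : f a - f x < ε := by have := abs_lt.mp h2; linarith
    nlinarith [mul_nonpos_of_nonpos_of_nonneg hK0 hxa]
  · push_neg at hcl
    have h1 : min 0 ((f x₀ - f a) / δ) * (x - a) ≤ min 0 ((f x₀ - f a) / δ) * δ :=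
      mul_le_mul_of_nonpos_left hcl hK0
    have h2 : min 0 ((f x₀ - f a) / δ) * δ ≤ f x₀ - f a := by
      have h := min_le_right 0 ((f x₀ - f a) / δ)
      have h' := mul_le_mul_of_nonneg_right h hδ.le
      rwa [div_mul_cancel₀ _ hδ.ne'] at h'
    have h3 : f x₀ ≤ f x := hmin hx
    linarith

/-- the convex envelope agrees with `f` at the left endpoint -/
lemma convEnv_left (hf : Continuous f) (hab : a ≤ b) : convEnv f a b a = f a := by
  refine le_antisymm (convEnv_le hf hab (left_mem_Icc.2 hab)) ?_
  refine le_of_forall_pos_le_add fun ε hε => ?_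
  obtain ⟨K, hK⟩ := exists_line hf hab hε
  have h1 : f a - ε ≤ convEnv f a b a := by
    have := le_convEnv (f := f) (convexOn_affine (f a - ε) K a (convex_Icc a b)) hK
      (left_mem_Icc.2 hab)
    simpa using this
  linarith

end CEAux

open CEAux

theorem convEnv_agrees_before_maximal_shock (f : ℝ → ℝ) (a b u₀ u₁ u₂ : ℝ)
    (hf : Continuous f) (h1 : a < u₀) (h2 : u₀ < b)
    (hsub : Set.Ioo u₁ u₂ ⊆ Set.Icc a b)
    (hshock : ∀ u ∈ Set.Ioo u₁ u₂, convEnv f a b u < f u)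
    (hmax : ∀ c d : ℝ, Set.Ioo c d ⊆ Set.Icc a b →
      (∀ u ∈ Set.Ioo c d, convEnv f a b u < f u) →
      Set.Ioo u₁ u₂ ⊆ Set.Ioo c d → Set.Ioo c d = Set.Ioo u₁ u₂)
    (hu₀ : u₀ ∈ Set.Ioo u₁ u₂) :
    ∀ u ∈ Set.Icc a u₁, convEnv f a u₀ u = convEnv f a b u := by
  have hab : a ≤ b := (h1.trans h2).le
  have hau₀ : a ≤ u₀ := h1.le
  have hu₁u₀ : u₁ < u₀ := hu₀.1
  have hu₀u₂ : u₀ < u₂ := hu₀.2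
  have hu₂b : u₂ ≤ b := by
    by_contra h
    push_neg at h
    have ht : (b + u₂) / 2 ∈ Ioo u₁ u₂ := ⟨by linarith, by linarith⟩
    have := (hsub ht).2
    linarith
  have hu₁b : u₁ < b := hu₁u₀.trans h2
  have hu₀b : u₀ ≤ b := h2.le
  intro u hu
  have hau₁ : a ≤ u₁ := hu.1.trans hu.2
  have huu₀ : u ≤ u₀ := hu.2.trans hu₁u₀.le
  have hub : u ≤ b := huu₀.trans hu₀b
  have huIcc : u ∈ Icc a b := ⟨hu.1, hub⟩
  have huIcc₀ : u ∈ Icc a u₀ := ⟨hu.1, huu₀⟩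
  have hu₁Icc : u₁ ∈ Icc a b := ⟨hau₁, hu₁b.le⟩
  have hu₁Icc₀ : u₁ ∈ Icc a u₀ := ⟨hau₁, hu₁u₀.le⟩
  -- easy direction
  have heasy : convEnv f a b u ≤ convEnv f a u₀ u := by
    rw [convEnv_eq, convEnv_eq]
    refine csSup_le_csSup (bddAbove_ESet huIcc₀) (ESet_nonempty hf hab u) ?_
    rintro _ ⟨g, hg, hgf, rfl⟩
    exact ⟨g, hg.subset (Icc_subset_Icc_right hu₀b) (convex_Icc a u₀),
      fun x hx => hgf x (Icc_subset_Icc_right hu₀b hx), rfl⟩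
  -- trivial case u = a
  rcases eq_or_lt_of_le hu.1 with h | hau
  · rw [← h, convEnv_left hf hau₀, convEnv_left hf hab]
  have hau₁' : a < u₁ := hau.trans_le hu.2
  -- the envelope touches f at u₁
  have hE : ConvexOn ℝ (Icc a b) (convEnv f a b) := convexOn_convEnv hf hab
  have hEu₁ : convEnv f a b u₁ = f u₁ := by
    refine le_antisymm (convEnv_le hf hab hu₁Icc) ?_
    by_contra hlt
    push_neg at hlt
    have hcont : ContinuousOn (convEnv f a b) (Ioo a b) :=
      (hE.subset Ioo_subset_Icc_self (convex_Ioo a b)).continuousOn isOpen_Ioo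
    have hcA : ContinuousAt (convEnv f a b) u₁ :=
      hcont.continuousAt (isOpen_Ioo.mem_nhds ⟨hau₁', hu₁b⟩)
    have htend : ContinuousAt (fun x => f x - convEnv f a b x) u₁ :=
      hf.continuousAt.sub hcA
    have h0 : (0 : ℝ) < f u₁ - convEnv f a b u₁ := by linarith
    have hev : ∀ᶠ x in nhds u₁, 0 < f x - convEnv f a b x :=
      htend.eventually (eventually_gt_nhds h0)
    obtain ⟨δ, hδ, hball⟩ := Metric.eventually_nhds_iff.mp hev
    set δ' := min δ (u₁ - a) with hδ'def
    have hδ' : 0 < δ' := lt_min hδ (by linarith)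
    set c := u₁ - δ' / 2 with hcdef
    have hca : a < c := by
      have : δ' ≤ u₁ - a := min_le_right _ _
      simp only [hcdef]; linarith
    have hcu₁ : c < u₁ := by simp only [hcdef]; linarith
    have hmm := hmax c u₂ ?_ ?_ ?_
    · have : u₁ ∈ Ioo c u₂ := ⟨hcu₁, hu₁u₀.trans hu₀u₂⟩
      rw [hmm] at this
      exact lt_irrefl u₁ this.1
    · intro x hx
      exact ⟨(hca.trans hx.1).le, hx.2.le.trans hu₂b⟩
    · intro x hx
      by_cases hxu₁ : u₁ < x
      · exact hshock x ⟨hxu₁, hx.2⟩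
      · push_neg at hxu₁
        have hdist : dist x u₁ < δ := by
          rw [Real.dist_eq, abs_of_nonpos (by linarith)]
          have : δ' ≤ δ := min_le_left _ _
          have := hx.1
          simp only [hcdef] at this
          linarith
        have := hball hdist
        linarith
    · exact fun x hx => ⟨hcu₁.trans hx.1, hx.2⟩
  -- supporting line of the envelope at u₁
  obtain ⟨s, hs⟩ := exists_support hE hau₁' hu₁b
  -- hard direction
  have hhard : convEnv f a u₀ u ≤ convEnv f a b u := by
    rw [convEnv_eq f a u₀ u]
    refine csSup_le (ESet_nonempty hf hau₀ u) ?_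
    rintro _ ⟨g, hg, hgf, rfl⟩
    obtain ⟨σ, hσ⟩ := exists_support hg hau (hu.2.trans_lt hu₁u₀)
    by_cases hcase : σ ≤ s
    · -- build a competitor: max of the supporting line of g at u and of env at u₁
      set T : ℝ → ℝ := fun x => g u + σ * (x - u) with hTdef
      set L : ℝ → ℝ := fun x => f u₁ + s * (x - u₁) with hLdef
      have hL_le : ∀ x ∈ Icc a b, L x ≤ f x := by
        intro x hx
        have h1 := hs x hx
        have h2 := convEnv_le hf hab hx
        simp only [hLdef]
        rw [hEu₁] at h1
        linarith
      have hT_le : ∀ x ∈ Icc a b, T x ≤ f x := by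
        intro x hx
        by_cases hx0 : x ≤ u₀
        · have h1 := hσ x ⟨hx.1, hx0⟩
          have h2 := hgf x ⟨hx.1, hx0⟩
          simp only [hTdef]; linarith
        · push_neg at hx0
          have hxu₁ : u₁ < x := hu₁u₀.trans hx0
          have h1 := hσ u₁ hu₁Icc₀
          have h2 := hgf u₁ hu₁Icc₀
          have h3 := hs x hx
          rw [hEu₁] at h3
          have h4 := convEnv_le hf hab hx
          have h5 : σ * (x - u₁) ≤ s * (x - u₁) :=
            mul_le_mul_of_nonneg_right hcase (by linarith)
          simp only [hTdef]
          nlinarith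
      have hmaxTL : ConvexOn ℝ (Icc a b) (fun x => max (T x) (L x)) :=
        (convexOn_affine (g u) σ u (convex_Icc a b)).sup
          (convexOn_affine (f u₁) s u₁ (convex_Icc a b))
      have hle : (fun x => max (T x) (L x)) u ≤ convEnv f a b u :=
        le_convEnv hmaxTL (fun x hx => max_le (hT_le x hx) (hL_le x hx)) huIcc
      have : g u ≤ max (T u) (L u) := by
        have : T u = g u := by simp [hTdef]
        rw [← this]; exact le_max_left _ _
      exact this.trans hle
    · -- steep case: g is already below the supporting line of the envelope at u₁
      push_neg at hcase
      have h1 := hσ u₁ hu₁Icc₀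
      have h2 := hgf u₁ hu₁Icc₀
      have h3 := hs u huIcc
      rw [hEu₁] at h3
      have h4 : s * (u₁ - u) ≤ σ * (u₁ - u) :=
        mul_le_mul_of_nonneg_right hcase.le (by linarith [hu.2])
      nlinarith
  linarith
end

section
/- Shrinking the domain from the right increases the right derivative of the convex envelope: for continuous f and a < ū < b, for every u ∈ [a,ū), the right derivative of conv_{[a,ū]} f at u is greater than or equal to the right derivative of conv_{[a,b]} f at u. -/
open Set

open Filter Topology

private lemma affine_convexOn (s : Set ℝ) (hs : Convex ℝ s) (p q w : ℝ) :
    ConvexOn ℝ s (fun x => p + q * (x - w)) := by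
  refine ⟨hs, fun x _ y _ t1 t2 h1 h2 h12 => ?_⟩
  simp only [smul_eq_mul]
  have ht2 : t2 = 1 - t1 := by linarith
  subst ht2
  exact le_of_eq (by ring)

private lemma slope_monoOn {g : ℝ → ℝ} {a c u : ℝ} (hg : ConvexOn ℝ (Icc a c) g)
    (hu : u ∈ Ico a c) : MonotoneOn (slope g u) (Ioo u c) := by
  intro x hx y hy hxy
  rw [slope_def_field, slope_def_field]
  exact hg.secant_mono ⟨hu.1, hu.2.le⟩ ⟨hu.1.trans hx.1.le, hx.2.le⟩
    ⟨hu.1.trans hy.1.le, hy.2.le⟩ hx.1.ne' hy.1.ne' hxy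

private lemma sInf_slope_le {g : ℝ → ℝ} {a c u : ℝ} (hg : ConvexOn ℝ (Icc a c) g)
    (hu : u ∈ Ico a c) (hB : BddBelow (slope g u '' Ioo u c)) {v : ℝ}
    (h1 : u < v) (h2 : v ≤ c) :
    sInf (slope g u '' Ioo u c) ≤ (g v - g u) / (v - u) := by
  set w := (u + v) / 2 with hw
  have hw1 : u < w := by rw [hw]; linarith
  have hw2 : w < v := by rw [hw]; linarith
  have hwc : w < c := lt_of_lt_of_le hw2 h2
  have h3 : sInf (slope g u '' Ioo u c) ≤ slope g u w := csInf_le hB ⟨w, ⟨hw1, hwc⟩, rfl⟩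
  rw [slope_def_field] at h3
  have h4 : (g w - g u) / (w - u) ≤ (g v - g u) / (v - u) :=
    hg.secant_mono ⟨hu.1, hu.2.le⟩ ⟨hu.1.trans hw1.le, hwc.le⟩
      ⟨hu.1.trans h1.le, h2⟩ hw1.ne' h1.ne' hw2.le
  exact h3.trans h4

private lemma slope_le_sInf {g : ℝ → ℝ} {a c u : ℝ} (hg : ConvexOn ℝ (Icc a c) g)
    (hu : u ∈ Ico a c) {x : ℝ} (h1 : a ≤ x) (h2 : x < u) :
    (g x - g u) / (x - u) ≤ sInf (slope g u '' Ioo u c) := by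
  refine le_csInf ((nonempty_Ioo.2 hu.2).image (slope g u)) ?_
  rintro r ⟨v, hv, rfl⟩
  rw [slope_def_field]
  exact hg.secant_mono ⟨hu.1, hu.2.le⟩ ⟨h1, (h2.trans hu.2).le⟩
    ⟨hu.1.trans hv.1.le, hv.2.le⟩ h2.ne hv.1.ne' ((h2.trans hv.1).le)

private lemma support_line {g : ℝ → ℝ} {a c u : ℝ} (hg : ConvexOn ℝ (Icc a c) g)
    (hu : u ∈ Ico a c) (hB : BddBelow (slope g u '' Ioo u c)) {x : ℝ} (hx : x ∈ Icc a c) :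
    g u + sInf (slope g u '' Ioo u c) * (x - u) ≤ g x := by
  rcases lt_trichotomy x u with h | h | h
  · have hsl := slope_le_sInf (c := c) hg hu hx.1 h
    have hxu : x - u < 0 := by linarith
    have := (div_le_iff_of_neg hxu).mp hsl
    linarith
  · subst h; simp
  · have hsl := sInf_slope_le hg hu hB h hx.2
    have hxu : (0:ℝ) < x - u := by linarith
    have := (le_div_iff₀ hxu).mp hsl
    linarith

private lemma env_hasDeriv {g : ℝ → ℝ} {a c u : ℝ} (hg : ConvexOn ℝ (Icc a c) g)
    (hu : u ∈ Ico a c) (hB : BddBelow (slope g u '' Ioo u c)) :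
    HasDerivWithinAt g (sInf (slope g u '' Ioo u c)) (Ici u) u := by
  rw [hasDerivWithinAt_iff_tendsto_slope, Ici_sdiff_left]
  exact MonotoneOn.tendsto_nhdsWithin_Ioo_right (nonempty_Ioo.2 hu.2) (slope_monoOn hg hu) hB

private lemma not_diff_of_unbdd {g : ℝ → ℝ} {a c u : ℝ} (hg : ConvexOn ℝ (Icc a c) g)
    (hu : u ∈ Ico a c) (hB : ¬ BddBelow (slope g u '' Ioo u c)) :
    ¬ DifferentiableWithinAt ℝ g (Ici u) u := by
  intro hd
  obtain ⟨d, hdd⟩ : ∃ d, HasDerivWithinAt g d (Ici u) u := ⟨_, hd.hasDerivWithinAt⟩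
  rw [hasDerivWithinAt_iff_tendsto_slope, Ici_sdiff_left] at hdd
  have hev : ∀ᶠ v in 𝓝[>] u, d - 1 < slope g u v :=
    hdd.eventually (eventually_gt_nhds (by linarith))
  obtain ⟨u', hu', hsub⟩ := (mem_nhdsGT_iff_exists_Ioo_subset' hu.2).mp hev
  set w := (u + min u' c) / 2 with hwdef
  have hmm : u < min u' c := lt_min hu' hu.2
  have hwu : u < w := by rw [hwdef]; linarith
  have hwm : w < min u' c := by rw [hwdef]; linarith
  have hw1 : w ∈ Ioo u c := ⟨hwu, hwm.trans_le (min_le_right _ _)⟩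
  have hw2 : w ∈ Ioo u u' := ⟨hwu, hwm.trans_le (min_le_left _ _)⟩
  apply hB
  refine ⟨min (d - 1) (slope g u w), ?_⟩
  rintro r ⟨v, hv, rfl⟩
  rcases lt_or_ge v u' with h | h
  · exact le_trans (min_le_left _ _) (hsub ⟨hv.1, h⟩).le
  · exact le_trans (min_le_right _ _)
      (slope_monoOn hg hu hw1 hv ((hwm.trans_le (min_le_left _ _)).le.trans h))

private lemma convEnv_bddAbove (f : ℝ → ℝ) {a c u : ℝ} (hu : u ∈ Icc a c) :
    BddAbove {y : ℝ | ∃ g : ℝ → ℝ, ConvexOn ℝ (Icc a c) g ∧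
      (∀ x ∈ Icc a c, g x ≤ f x) ∧ g u = y} := by
  refine ⟨f u, ?_⟩
  rintro y ⟨g, _, hgf, rfl⟩
  exact hgf u hu

private lemma convEnv_setNonempty {f : ℝ → ℝ} {a c : ℝ} (hac : a ≤ c) (hf : Continuous f)
    (u : ℝ) : Set.Nonempty {y : ℝ | ∃ g : ℝ → ℝ, ConvexOn ℝ (Icc a c) g ∧
      (∀ x ∈ Icc a c, g x ≤ f x) ∧ g u = y} := by
  obtain ⟨x₀, hx₀, hmin⟩ := isCompact_Icc.exists_isMinOn (nonempty_Icc.2 hac) hf.continuousOn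
  exact ⟨f x₀, fun _ => f x₀, convexOn_const _ (convex_Icc a c),
    fun x hx => isMinOn_iff.mp hmin x hx, rfl⟩

private lemma le_convEnv' {f : ℝ → ℝ} {a c : ℝ} {g : ℝ → ℝ} (hg : ConvexOn ℝ (Icc a c) g)
    (hgf : ∀ x ∈ Icc a c, g x ≤ f x) {u : ℝ} (hu : u ∈ Icc a c) :
    g u ≤ convEnv f a c u :=
  le_csSup (convEnv_bddAbove f hu) ⟨g, hg, hgf, rfl⟩

private lemma convEnv_le_self {f : ℝ → ℝ} {a c : ℝ} (hac : a ≤ c) (hf : Continuous f)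
    {u : ℝ} (hu : u ∈ Icc a c) : convEnv f a c u ≤ f u := by
  refine csSup_le (convEnv_setNonempty hac hf u) ?_
  rintro y ⟨g, _, hgf, rfl⟩
  exact hgf u hu

private lemma convEnv_convexOn {f : ℝ → ℝ} {a c : ℝ} (hac : a ≤ c) (hf : Continuous f) :
    ConvexOn ℝ (Icc a c) (convEnv f a c) := by
  refine ⟨convex_Icc a c, fun x hx y hy p q hp hq hpq => ?_⟩
  refine csSup_le (convEnv_setNonempty hac hf _) ?_
  rintro r ⟨g, hg, hgf, rfl⟩
  calc g (p • x + q • y) ≤ p • g x + q • g y := hg.2 hx hy hp hq hpq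
    _ ≤ p • convEnv f a c x + q • convEnv f a c y := by
        simp only [smul_eq_mul]
        have l1 := le_convEnv' hg hgf hx
        have l2 := le_convEnv' hg hgf hy
        nlinarith

private lemma convEnv_left_endpoint {f : ℝ → ℝ} {a c : ℝ} (hac : a < c) (hf : Continuous f) :
    convEnv f a c a = f a := by
  refine le_antisymm (convEnv_le_self hac.le hf ⟨le_refl a, hac.le⟩) ?_
  refine le_of_forall_sub_le fun ε hε => ?_
  obtain ⟨x₀, hx₀, hmin⟩ := isCompact_Icc.exists_isMinOn (nonempty_Icc.2 hac.le) hf.continuousOn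
  obtain ⟨η, hη, hcont⟩ := Metric.continuous_iff.mp hf a ε hε
  set K := max 0 ((f a - ε - f x₀) / η) with hK
  have hK0 : 0 ≤ K := le_max_left _ _
  have hK1 : (f a - ε - f x₀) / η ≤ K := le_max_right _ _
  have hgf : ∀ x ∈ Icc a c, (f a - ε) + (-K) * (x - a) ≤ f x := by
    intro x hx
    rcases lt_or_ge (x - a) η with h | h
    · have hd : dist x a < η := by
        rw [Real.dist_eq, abs_of_nonneg (by linarith [hx.1])]; exact h
      have := hcont x hd
      rw [Real.dist_eq, abs_lt] at this
      nlinarith [mul_nonneg hK0 (by linarith [hx.1] : (0:ℝ) ≤ x - a)]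
    · have hKη : f a - ε - f x₀ ≤ K * η := (div_le_iff₀ hη).mp hK1
      have hKx : K * η ≤ K * (x - a) := by nlinarith
      have := isMinOn_iff.mp hmin x hx
      linarith
  have := le_convEnv' (affine_convexOn (Icc a c) (convex_Icc a c) (f a - ε) (-K) a)
    hgf ⟨le_refl a, hac.le⟩
  simpa using this

/-- Transfer of bounded-below right slopes at the left endpoint,
from the small envelope to the big envelope. -/
private lemma bddBelow_transfer {f : ℝ → ℝ} {a u₀ b : ℝ} (hf : Continuous f)
    (h1 : a < u₀) (h2 : u₀ < b)
    (hB0 : BddBelow (slope (convEnv f a u₀) a '' Ioo a u₀)) :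
    BddBelow (slope (convEnv f a b) a '' Ioo a b) := by
  have hab : a < b := h1.trans h2
  have hg0conv : ConvexOn ℝ (Icc a u₀) (convEnv f a u₀) := convEnv_convexOn h1.le hf
  have hg0_le_f : ∀ x ∈ Icc a u₀, convEnv f a u₀ x ≤ f x :=
    fun x hx => convEnv_le_self h1.le hf hx
  have hu0 : a ∈ Ico a u₀ := ⟨le_refl a, h1⟩
  obtain ⟨x₀, hx₀, hmin⟩ := isCompact_Icc.exists_isMinOn (nonempty_Icc.2 hab.le) hf.continuousOn
  set t := sInf (slope (convEnv f a u₀) a '' Ioo a u₀) with ht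
  set L := min t ((f x₀ - f a) / (u₀ - a)) with hL
  have hg0a : convEnv f a u₀ a = f a := convEnv_left_endpoint h1 hf
  have hgba : convEnv f a b a = f a := convEnv_left_endpoint hab hf
  have hfx₀a : f x₀ ≤ f a := isMinOn_iff.mp hmin a ⟨le_refl a, hab.le⟩
  have hu₀a : (0:ℝ) < u₀ - a := by linarith
  have hline : ∀ x ∈ Icc a b, f a + L * (x - a) ≤ f x := by
    intro x hx
    rcases eq_or_lt_of_le hx.1 with h | h
    · rw [← h]; simp
    · rcases le_or_gt x u₀ with hxu | hxu
      · have hslope : t ≤ (convEnv f a u₀ x - convEnv f a u₀ a) / (x - a) :=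
          sInf_slope_le hg0conv hu0 hB0 h hxu
        have hfx : convEnv f a u₀ x ≤ f x := hg0_le_f x ⟨hx.1, hxu⟩
        have hpos : (0:ℝ) < x - a := by linarith
        have h5 := (le_div_iff₀ hpos).mp hslope
        have h6 : L ≤ t := min_le_left _ _
        nlinarith
      · have h6 : L ≤ (f x₀ - f a) / (u₀ - a) := min_le_right _ _
        have h7 : (f x₀ - f a) / (u₀ - a) ≤ 0 :=
          div_nonpos_of_nonpos_of_nonneg (by linarith) (by linarith)
        have h8 : ((f x₀ - f a) / (u₀ - a)) * (u₀ - a) = f x₀ - f a :=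
          div_mul_cancel₀ _ (ne_of_gt hu₀a)
        have hpos : (0:ℝ) < x - a := by linarith
        have h9 : L * (x - a) ≤ ((f x₀ - f a) / (u₀ - a)) * (x - a) := by nlinarith
        have h10 : ((f x₀ - f a) / (u₀ - a)) * (x - a) ≤
            ((f x₀ - f a) / (u₀ - a)) * (u₀ - a) := by nlinarith
        have := isMinOn_iff.mp hmin x hx
        linarith
  refine ⟨L, ?_⟩
  rintro r ⟨v, hv, rfl⟩
  have hvmem : v ∈ Icc a b := ⟨hv.1.le, hv.2.le⟩
  have hlv : f a + L * (v - a) ≤ convEnv f a b v :=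
    le_convEnv' (affine_convexOn (Icc a b) (convex_Icc a b) (f a) L a) hline hvmem
  rw [slope_def_field]
  have hpos : (0:ℝ) < v - a := by linarith [hv.1]
  rw [le_div_iff₀ hpos, hgba]
  linarith

/-- Transfer of bounded-below right slopes at the left endpoint,
from the big envelope to the small envelope. -/
private lemma bddBelow_shrink {f : ℝ → ℝ} {a u₀ b : ℝ} (hf : Continuous f)
    (h1 : a < u₀) (h2 : u₀ < b)
    (hB : BddBelow (slope (convEnv f a b) a '' Ioo a b)) :
    BddBelow (slope (convEnv f a u₀) a '' Ioo a u₀) := by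
  obtain ⟨L, hL⟩ := hB
  have hab : a < b := h1.trans h2
  have hgbconv : ConvexOn ℝ (Icc a b) (convEnv f a b) := convEnv_convexOn hab.le hf
  have hsub : Icc a u₀ ⊆ Icc a b := Icc_subset_Icc_right h2.le
  have hgbconv' : ConvexOn ℝ (Icc a u₀) (convEnv f a b) := hgbconv.subset hsub (convex_Icc _ _)
  have hgb_le_f' : ∀ x ∈ Icc a u₀, convEnv f a b x ≤ f x :=
    fun x hx => convEnv_le_self hab.le hf (hsub hx)
  have hle : ∀ x ∈ Icc a u₀, convEnv f a b x ≤ convEnv f a u₀ x :=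
    fun x hx => le_convEnv' hgbconv' hgb_le_f' hx
  have heq : convEnv f a u₀ a ≤ convEnv f a b a := by
    rw [convEnv_left_endpoint hab hf]
    exact convEnv_le_self h1.le hf ⟨le_refl a, h1.le⟩
  refine ⟨L, ?_⟩
  rintro r ⟨v, hv, rfl⟩
  have hLv : L ≤ slope (convEnv f a b) a v := hL ⟨v, ⟨hv.1, hv.2.trans h2⟩, rfl⟩
  have hb2 : convEnv f a b v ≤ convEnv f a u₀ v := hle v ⟨hv.1.le, hv.2.le⟩
  rw [slope_def_field] at hLv ⊢
  have hpv : (0:ℝ) < v - a := by linarith [hv.1]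
  have hcomp : (convEnv f a b v - convEnv f a b a) / (v - a) ≤
      (convEnv f a u₀ v - convEnv f a u₀ a) / (v - a) := by
    gcongr <;> linarith
  linarith

theorem convEnv_rightDeriv_ge_of_shrink_right (f : ℝ → ℝ) (a b u₀ : ℝ)
    (hf : Continuous f) (h1 : a < u₀) (h2 : u₀ < b) :
    ∀ u ∈ Set.Ico a u₀,
      derivWithin (convEnv f a b) (Set.Ici u) u ≤
        derivWithin (convEnv f a u₀) (Set.Ici u) u := by
  intro u hu
  set gb := convEnv f a b with hgbdef
  set g0 := convEnv f a u₀ with hg0def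
  have hab : a < b := h1.trans h2
  have hgbconv : ConvexOn ℝ (Icc a b) gb := convEnv_convexOn hab.le hf
  have hg0conv : ConvexOn ℝ (Icc a u₀) g0 := convEnv_convexOn h1.le hf
  have hgb_le_f : ∀ x ∈ Icc a b, gb x ≤ f x := fun x hx => convEnv_le_self hab.le hf hx
  have hg0_le_f : ∀ x ∈ Icc a u₀, g0 x ≤ f x := fun x hx => convEnv_le_self h1.le hf hx
  have hsub : Icc a u₀ ⊆ Icc a b := Icc_subset_Icc_right h2.le
  have hgbconv' : ConvexOn ℝ (Icc a u₀) gb := hgbconv.subset hsub (convex_Icc _ _)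
  have hgb_le_f' : ∀ x ∈ Icc a u₀, gb x ≤ f x := fun x hx => hgb_le_f x (hsub hx)
  have hle : ∀ x ∈ Icc a u₀, gb x ≤ g0 x := fun x hx => le_convEnv' hgbconv' hgb_le_f' hx
  have hu0 : u ∈ Ico a u₀ := hu
  have hub : u ∈ Ico a b := ⟨hu.1, hu.2.trans h2⟩
  by_cases hB0 : BddBelow (slope g0 u '' Ioo u u₀)
  · -- differentiable case
    have hBb : BddBelow (slope gb u '' Ioo u b) := by
      rcases eq_or_lt_of_le hu.1 with hua | hau
      · rw [hgbdef, ← hua]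
        refine bddBelow_transfer hf h1 h2 ?_
        rw [hg0def, ← hua] at hB0
        exact hB0
      · refine ⟨slope gb u a, ?_⟩
        rintro r ⟨v, hv, rfl⟩
        rw [slope_def_field, slope_def_field]
        exact hgbconv.secant_mono ⟨hub.1, hub.2.le⟩ ⟨le_refl a, hab.le⟩
          ⟨hu.1.trans hv.1.le, hv.2.le⟩ hau.ne hv.1.ne' (hau.le.trans hv.1.le)
    set s := sInf (slope gb u '' Ioo u b) with hs
    set t := sInf (slope g0 u '' Ioo u u₀) with ht
    have hds : HasDerivWithinAt gb s (Ici u) u := env_hasDeriv hgbconv hub hBb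
    have hdt : HasDerivWithinAt g0 t (Ici u) u := env_hasDeriv hg0conv hu0 hB0
    rw [hds.derivWithin (uniqueDiffOn_Ici u u self_mem_Ici),
      hdt.derivWithin (uniqueDiffOn_Ici u u self_mem_Ici)]
    by_contra hst
    push_neg at hst
    -- hst : t < s
    have hc0nn : 0 ≤ g0 u - gb u := sub_nonneg.mpr (hle u ⟨hu.1, hu.2.le⟩)
    set δ := max 0 ((g0 u - gb u) - (s - t) * (u₀ - u)) with hδ
    have hδnn : 0 ≤ δ := le_max_left _ _
    have hδge : (g0 u - gb u) - (s - t) * (u₀ - u) ≤ δ := le_max_right _ _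
    have hsupp_b : ∀ x ∈ Icc a b, gb u + s * (x - u) ≤ gb x :=
      fun x hx => support_line hgbconv hub hBb hx
    have hsupp_0 : ∀ x ∈ Icc a u₀, g0 u + t * (x - u) ≤ g0 x :=
      fun x hx => support_line hg0conv hu0 hB0 hx
    have hhconv : ConvexOn ℝ (Icc a b)
        ((fun x => gb u + s * (x - u)) ⊔ (fun x => (g0 u - δ) + t * (x - u))) :=
      (affine_convexOn (Icc a b) (convex_Icc a b) (gb u) s u).sup
        (affine_convexOn (Icc a b) (convex_Icc a b) (g0 u - δ) t u)
    have hhf : ∀ x ∈ Icc a b,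
        ((fun x => gb u + s * (x - u)) ⊔ (fun x => (g0 u - δ) + t * (x - u))) x ≤ f x := by
      intro x hx
      refine sup_le ?_ ?_
      · exact (hsupp_b x hx).trans (hgb_le_f x hx)
      · rcases le_or_gt x u₀ with hxu | hxu
        · have ha1 := hsupp_0 x ⟨hx.1, hxu⟩
          have ha2 := hg0_le_f x ⟨hx.1, hxu⟩
          simp only []
          linarith
        · have hb1 := hsupp_b x hx
          have hb2 := hgb_le_f x hx
          have hb4 : (s - t) * (u₀ - u) ≤ (s - t) * (x - u) := by
            apply mul_le_mul_of_nonneg_left (by linarith) (by linarith)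
          simp only []
          nlinarith
    have hkey : ((fun x => gb u + s * (x - u)) ⊔ (fun x => (g0 u - δ) + t * (x - u))) u ≤ gb u :=
      le_convEnv' hhconv hhf ⟨hu.1, (hu.2.trans h2).le⟩
    have hku : g0 u - δ ≤ gb u := by
      have h1' : (g0 u - δ) + t * (u - u) ≤
          ((fun x => gb u + s * (x - u)) ⊔ (fun x => (g0 u - δ) + t * (x - u))) u :=
        le_sup_right
      simp only [sub_self, mul_zero, add_zero] at h1'
      linarith
    have hpos : 0 < (s - t) * (u₀ - u) := mul_pos (by linarith) (by linarith [hu.2])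
    have hc00 : g0 u = gb u := by
      by_contra hne
      have hc0pos : 0 < g0 u - gb u := lt_of_le_of_ne hc0nn (by intro h; exact hne (by linarith))
      have : δ < g0 u - gb u := max_lt hc0pos (by linarith)
      linarith
    have hst' : s ≤ t := by
      rw [ht]
      refine le_csInf ((nonempty_Ioo.2 hu.2).image (slope g0 u)) ?_
      rintro r ⟨v, hv, rfl⟩
      have hb1 : s ≤ (gb v - gb u) / (v - u) :=
        sInf_slope_le hgbconv hub hBb hv.1 (hv.2.le.trans h2.le)
      have hb2 : gb v ≤ g0 v := hle v ⟨hu.1.trans hv.1.le, hv.2.le⟩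
      rw [slope_def_field]
      have hpv : (0:ℝ) < v - u := by linarith [hv.1]
      calc s ≤ (gb v - gb u) / (v - u) := hb1
        _ ≤ (g0 v - g0 u) / (v - u) := by gcongr <;> linarith
    linarith
  · -- non-differentiable case: u must equal a and both derivatives are junk 0
    have hua : u = a := by
      by_contra hne
      have hau : a < u := lt_of_le_of_ne hu.1 (Ne.symm hne)
      apply hB0
      refine ⟨slope g0 u a, ?_⟩
      rintro r ⟨v, hv, rfl⟩
      rw [slope_def_field, slope_def_field]
      exact hg0conv.secant_mono ⟨hu.1, hu.2.le⟩ ⟨le_refl a, h1.le⟩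
        ⟨hu.1.trans hv.1.le, hv.2.le⟩ hau.ne hv.1.ne' (hau.le.trans hv.1.le)
    have hBb : ¬ BddBelow (slope gb u '' Ioo u b) := by
      intro hL
      apply hB0
      rw [hg0def, hua]
      rw [hgbdef, hua] at hL
      exact bddBelow_shrink hf h1 h2 hL
    rw [derivWithin_zero_of_not_differentiableWithinAt (not_diff_of_unbdd hgbconv hub hBb),
      derivWithin_zero_of_not_differentiableWithinAt (not_diff_of_unbdd hg0conv hu0 hB0)]
end
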